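/- arXiv:1811.06475 — 6 statements merged into one kernel-verified Lean document; each statement's English description precedes it below -/
import Mathlib

section
/- For any nonnegative integer y and parameters q, μ, ν with 0 < q < 1, the sum over s from 0 to y of φ_{q,μ,ν}(s|y) := μ^s · ((ν/μ;q)_s (μ;q)_{y−s} / (ν;q)_y) · ((q;q)_y / ((q;q)_s (q;q)_{y−s})) equals 1 (assuming all denominators are nonzero). -/
open Filter Topology MeasureTheory

/-- Finite q-Pochhammer symbol `(a;q)_n`. -/
noncomputable def qPoch (a q : ℝ) (n : ℕ) : ℝ := ∏ i ∈ Finset.range n, (1 - a * q ^ i)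

/-- Infinite q-Pochhammer symbol `(a;q)_∞`. -/
noncomputable def qPochInf (a q : ℝ) : ℝ := ∏' i : ℕ, (1 - a * q ^ i)

/-- The q-beta-binomial weight `φ_{q,μ,ν}(s|y)`. -/
noncomputable def phiW (q μ ν : ℝ) (s y : ℕ) : ℝ :=
  μ ^ s * (qPoch (ν / μ) q s * qPoch μ q (y - s) / qPoch ν q y) *
    (qPoch q q y / (qPoch q q s * qPoch q q (y - s)))

/-- The weight `φ_{q,μ,ν}(s|∞)`. -/
noncomputable def phiInfW (q μ ν : ℝ) (s : ℕ) : ℝ :=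
  μ ^ s * (qPoch (ν / μ) q s / qPoch q q s) * (qPochInf μ q / qPochInf ν q)

/-- The q-hypergeometric weight `ψ_{q,a,b,c}(p)`. -/
noncomputable def psiW (q a b c : ℝ) (p : ℕ) : ℝ :=
  (c / (a * b)) ^ p * (qPoch a q p * qPoch b q p / (qPoch q q p * qPoch c q p)) *
    (qPochInf c q * qPochInf (c / (a * b)) q / (qPochInf (c / a) q * qPochInf (c / b) q))

/-- The q-Hahn PushTASEP update probability `P_{ℓ,g}(L)`. -/
noncomputable def Phahn (q μ ν : ℝ) (ℓ g L : ℕ) : ℝ :=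
  ∑ p ∈ Finset.range (min ℓ L + 1),
    phiW q⁻¹ (q ^ g) (μ * ν * q ^ ((g : ℤ) - 1)) p ℓ *
      psiW q (ν * μ⁻¹ * q ^ p) (ν * q ^ g) (ν ^ 2 * q ^ (g + p)) (L - p)

/-- Auxiliary: unnormalized q-beta-binomial weight. -/
noncomputable def Tw (q mu nu : ℝ) (y s : ℕ) : ℝ :=
  mu ^ s * (qPoch (nu / mu) q s * qPoch mu q (y - s)) *
    (qPoch q q y / (qPoch q q s * qPoch q q (y - s)))

lemma qPoch_succ (a q : ℝ) (n : ℕ) :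
    qPoch a q (n + 1) = qPoch a q n * (1 - a * q ^ n) := Finset.prod_range_succ _ _

lemma qPoch_q_pos {q : ℝ} (hq0 : 0 < q) (hq1 : q < 1) (n : ℕ) : 0 < qPoch q q n := by
  unfold qPoch
  refine Finset.prod_pos fun i _ => ?_
  have h1 : q * q ^ i ≤ q * 1 := by
    have := pow_le_one₀ hq0.le hq1.le (n := i)
    nlinarith
  have h2 : 0 < q * q ^ i := by positivity
  nlinarith

lemma one_sub_ne {q : ℝ} (hq0 : 0 < q) (hq1 : q < 1) (n : ℕ) : (1 - q * q ^ n) ≠ 0 := by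
  have h1 : q * q ^ n ≤ q * 1 := by
    have := pow_le_one₀ hq0.le hq1.le (n := n); nlinarith
  have h2 : 0 < q * q ^ n := by positivity
  nlinarith

lemma qPoch_zero (a q : ℝ) : qPoch a q 0 = 1 := by simp [qPoch]

lemma Tw_zero {q : ℝ} (mu nu : ℝ) (hq0 : 0 < q) (hq1 : q < 1) (y : ℕ) :
    Tw q mu nu (y + 1) 0 = Tw q mu nu y 0 * (1 - mu * q ^ y) := by
  have hy := (qPoch_q_pos hq0 hq1 y).ne'
  have hy1 := one_sub_ne hq0 hq1 y
  have hy2 : 1 - q ^ y * q ≠ 0 := by rw [mul_comm]; exact hy1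
  simp only [Tw, Nat.sub_zero, qPoch_succ, qPoch_zero]
  field_simp

lemma Tw_top {q : ℝ} (mu nu : ℝ) (hq0 : 0 < q) (hq1 : q < 1) (y : ℕ) :
    Tw q mu nu (y + 1) (y + 1) = Tw q mu nu y y * (mu * (1 - (nu / mu) * q ^ y)) := by
  have hy := (qPoch_q_pos hq0 hq1 y).ne'
  have hy1 := one_sub_ne hq0 hq1 y
  have hy2 : 1 - q ^ y * q ≠ 0 := by rw [mul_comm]; exact hy1
  simp only [Tw, Nat.sub_self, qPoch_succ, qPoch_zero]
  field_simp
  ring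

lemma Tw_rec {q : ℝ} (mu nu : ℝ) (hq0 : 0 < q) (hq1 : q < 1) (s k : ℕ) :
    Tw q mu nu (s + k + 2) (s + 1) =
      Tw q mu nu (s + k + 1) (s + 1) * (1 - mu * q ^ k) +
        Tw q mu nu (s + k + 1) s * (mu * q ^ (k + 1) * (1 - (nu / mu) * q ^ s)) := by
  have e1 : s + k + 2 - (s + 1) = k + 1 := by omega
  have e2 : s + k + 1 - (s + 1) = k := by omega
  have e3 : s + k + 1 - s = k + 1 := by omega
  have e4 : s + k + 2 = (s + k + 1) + 1 := by omega
  have hs := (qPoch_q_pos hq0 hq1 s).ne'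
  have hk := (qPoch_q_pos hq0 hq1 k).ne'
  have hsk := (qPoch_q_pos hq0 hq1 (s + k + 1)).ne'
  have hqs := one_sub_ne hq0 hq1 s
  have hqk := one_sub_ne hq0 hq1 k
  have hqs2 : 1 - q ^ s * q ≠ 0 := by rw [mul_comm]; exact hqs
  have hqk2 : 1 - q ^ k * q ≠ 0 := by rw [mul_comm]; exact hqk
  simp only [Tw, e1, e2, e3, e4, qPoch_succ]
  field_simp
  ring

lemma Tw_sum {q : ℝ} (mu nu : ℝ) (hq0 : 0 < q) (hq1 : q < 1) (hmu : mu ≠ 0) (y : ℕ) :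
    ∑ s ∈ Finset.range (y + 1), Tw q mu nu y s = qPoch nu q y := by
  induction y with
  | zero => simp [Tw, qPoch]
  | succ y ih =>
    have split1 : ∑ s ∈ Finset.range (y + 2), Tw q mu nu (y + 1) s =
        (∑ s ∈ Finset.range (y + 1), Tw q mu nu (y + 1) (s + 1)) + Tw q mu nu (y + 1) 0 :=
      Finset.sum_range_succ' _ _
    have split2 : ∑ s ∈ Finset.range (y + 1), Tw q mu nu (y + 1) (s + 1) =
        (∑ s ∈ Finset.range y, Tw q mu nu (y + 1) (s + 1)) + Tw q mu nu (y + 1) (y + 1) :=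
      Finset.sum_range_succ _ _
    have hrec : ∀ s ∈ Finset.range y, Tw q mu nu (y + 1) (s + 1) =
        Tw q mu nu y (s + 1) * (1 - mu * q ^ (y - s - 1)) +
          Tw q mu nu y s * (mu * q ^ (y - s) * (1 - (nu / mu) * q ^ s)) := by
      intro s hs
      have hsy : s < y := Finset.mem_range.mp hs
      obtain ⟨k, rfl⟩ : ∃ k, y = s + k + 1 := ⟨y - s - 1, by omega⟩
      have e1 : s + k + 1 - s - 1 = k := by omega
      have e2 : s + k + 1 - s = k + 1 := by omega
      rw [e1, e2]
      exact Tw_rec mu nu hq0 hq1 s k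
    -- sum A: ∑_{s=0}^{y} Tw y s * (1 - mu q^{y-s})
    have hA : ∑ s ∈ Finset.range (y + 1), Tw q mu nu y s * (1 - mu * q ^ (y - s)) =
        (∑ s ∈ Finset.range y, Tw q mu nu y (s + 1) * (1 - mu * q ^ (y - s - 1))) +
          Tw q mu nu y 0 * (1 - mu * q ^ y) := by
      rw [Finset.sum_range_succ' (fun s => Tw q mu nu y s * (1 - mu * q ^ (y - s)))]
      simp only [Nat.sub_zero]
      congr 1
    have hB : ∑ s ∈ Finset.range (y + 1),
          Tw q mu nu y s * (mu * q ^ (y - s) * (1 - (nu / mu) * q ^ s)) =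
        (∑ s ∈ Finset.range y, Tw q mu nu y s * (mu * q ^ (y - s) * (1 - (nu / mu) * q ^ s))) +
          Tw q mu nu y y * (mu * (1 - (nu / mu) * q ^ y)) := by
      rw [Finset.sum_range_succ, Nat.sub_self, pow_zero, mul_one]
    have hcomb : ∀ s ∈ Finset.range (y + 1),
        Tw q mu nu y s * (1 - mu * q ^ (y - s)) +
          Tw q mu nu y s * (mu * q ^ (y - s) * (1 - (nu / mu) * q ^ s)) =
        Tw q mu nu y s * (1 - nu * q ^ y) := by
      intro s hs
      have hsy : s ≤ y := by have := Finset.mem_range.mp hs; omega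
      have hpow : q ^ (y - s) * q ^ s = q ^ y := by
        rw [← pow_add, Nat.sub_add_cancel hsy]
      have hdm : nu / mu * mu = nu := div_mul_cancel₀ _ hmu
      have h5 : mu * q ^ (y - s) * ((nu / mu) * q ^ s) = nu * q ^ y := by
        calc mu * q ^ (y - s) * ((nu / mu) * q ^ s)
            = (nu / mu * mu) * (q ^ (y - s) * q ^ s) := by ring
          _ = nu * q ^ y := by rw [hdm, hpow]
      linear_combination (-(Tw q mu nu y s)) * h5
    calc ∑ s ∈ Finset.range (y + 2), Tw q mu nu (y + 1) s
        = (∑ s ∈ Finset.range y, Tw q mu nu (y + 1) (s + 1)) + Tw q mu nu (y + 1) (y + 1) +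
            Tw q mu nu (y + 1) 0 := by rw [split1, split2]
      _ = (∑ s ∈ Finset.range y, (Tw q mu nu y (s + 1) * (1 - mu * q ^ (y - s - 1)) +
            Tw q mu nu y s * (mu * q ^ (y - s) * (1 - (nu / mu) * q ^ s)))) +
            Tw q mu nu y y * (mu * (1 - (nu / mu) * q ^ y)) +
            Tw q mu nu y 0 * (1 - mu * q ^ y) := by
          rw [Finset.sum_congr rfl hrec, Tw_top mu nu hq0 hq1, Tw_zero mu nu hq0 hq1]
      _ = (∑ s ∈ Finset.range (y + 1), Tw q mu nu y s * (1 - mu * q ^ (y - s))) +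
            (∑ s ∈ Finset.range (y + 1),
              Tw q mu nu y s * (mu * q ^ (y - s) * (1 - (nu / mu) * q ^ s))) := by
          rw [hA, hB, Finset.sum_add_distrib]; ring
      _ = ∑ s ∈ Finset.range (y + 1), Tw q mu nu y s * (1 - nu * q ^ y) := by
          rw [← Finset.sum_add_distrib]
          exact Finset.sum_congr rfl hcomb
      _ = (∑ s ∈ Finset.range (y + 1), Tw q mu nu y s) * (1 - nu * q ^ y) := by
          rw [← Finset.sum_mul]
      _ = qPoch nu q (y + 1) := by rw [ih, qPoch_succ]

/-- Normalization of the q-beta-binomial distribution. -/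
theorem stmt_0 (q mu nu : ℝ) (y : ℕ) (hq0 : 0 < q) (hq1 : q < 1) (hmu : mu ≠ 0)
    (hnu : qPoch nu q y ≠ 0) (hqs : ∀ s ≤ y, qPoch q q s ≠ 0) :
    ∑ s ∈ Finset.range (y + 1), phiW q mu nu s y = 1 := by
  have key := Tw_sum mu nu hq0 hq1 hmu y
  have heq : ∀ s ∈ Finset.range (y + 1), phiW q mu nu s y = Tw q mu nu y s / qPoch nu q y := by
    intro s hs
    simp only [phiW, Tw]
    ring
  rw [Finset.sum_congr rfl heq, ← Finset.sum_div, key, div_self hnu]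
end

section
/- Fix real μ ∈ [0,1) and ν. The geometric-Bernoulli weights gB(α,β;k), defined by gB(α,β;0) = β and gB(α,β;k) = (1−β)(1−α)α^{k−1} for k ≥ 1, with the four second parameters β ∈ {(1−μ)/(1−ν), (1−μ)/(1−μν), (1−μ)/((1−ν)(1−μν)), (1−μ)(1+ν)/(1−μν)}, all lie in [0,1] (and hence define probability distributions on ℤ_{≥0} when combined with α = μ) if and only if either (−1 ≤ ν ≤ 0 and 0 ≤ μ < 1) or (0 < ν < 1 and ν/(1−ν+ν²) ≤ μ < 1). -/
open Filter Topology MeasureTheory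

/-- The geometric-Bernoulli weight. -/
noncomputable def gB (alpha beta : ℝ) (k : ℕ) : ℝ :=
  if k = 0 then beta else (1 - beta) * (1 - alpha) * alpha ^ (k - 1)

/-! For `ν < 1` every denominator is positive and the four conditions become polynomial:
`ν ≤ μ`, `μν ≤ μ`, `ν ≤ μ (1 - ν + ν²)` and `-1 ≤ ν ≤ μ`. Since `1 - ν + ν² ≤ 1` on `[0, 1]`,
the third one implies `ν ≤ μ`, leaving `-1 ≤ ν` and `ν / (1 - ν + ν²) ≤ μ`, the latter automatic for
`ν ≤ 0`. For `ν > 1` the first parameter is negative, and at `ν = 1` (where division by zero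
returns `0`) the fourth parameter equals `2`. -/

lemma div_mem_unit_iff {a b : ℝ} (hb : 0 < b) : (0 ≤ a / b ∧ a / b ≤ 1) ↔ (0 ≤ a ∧ a ≤ b) := by
  rw [le_div_iff₀ hb, zero_mul, div_le_one hb]

lemma one_sub_add_sq_pos (nu : ℝ) : 0 < 1 - nu + nu ^ 2 := by nlinarith [sq_nonneg (nu - 1 / 2)]

section gBParams

variable {mu nu : ℝ}

lemma le_of_le_mul_one_sub_add_sq (hmu0 : 0 ≤ mu) (hnu : nu < 1)
    (h : nu ≤ mu * (1 - nu + nu ^ 2)) : nu ≤ mu := by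
  rcases le_or_gt nu 0 with hnu0 | hnu0
  · linarith
  · nlinarith [mul_nonneg hmu0 (mul_pos hnu0 (sub_pos.mpr hnu)).le]

lemma gB_params_mem_unit_iff (hmu0 : 0 ≤ mu) (hmu1 : mu < 1) (hnu : nu < 1) :
    ((0 ≤ (1 - mu) / (1 - nu) ∧ (1 - mu) / (1 - nu) ≤ 1)
      ∧ (0 ≤ (1 - mu) / (1 - mu * nu) ∧ (1 - mu) / (1 - mu * nu) ≤ 1)
      ∧ (0 ≤ (1 - mu) / ((1 - nu) * (1 - mu * nu))
          ∧ (1 - mu) / ((1 - nu) * (1 - mu * nu)) ≤ 1)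
      ∧ (0 ≤ (1 - mu) * (1 + nu) / (1 - mu * nu)
          ∧ (1 - mu) * (1 + nu) / (1 - mu * nu) ≤ 1))
    ↔ (-1 ≤ nu ∧ nu / (1 - nu + nu ^ 2) ≤ mu) := by
  have hA : 0 < 1 - nu := sub_pos.mpr hnu
  have hB : 0 < 1 - mu * nu := by nlinarith
  have hmu : 0 < 1 - mu := sub_pos.mpr hmu1
  rw [div_mem_unit_iff hA, div_mem_unit_iff hB, div_mem_unit_iff (mul_pos hA hB),
    div_mem_unit_iff hB, div_le_iff₀ (one_sub_add_sq_pos nu)]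
  constructor
  · rintro ⟨-, -, ⟨-, hC1⟩, ⟨hD0, -⟩⟩
    exact ⟨by nlinarith, by linarith⟩
  · rintro ⟨hnu1, hmq⟩
    have hle := le_of_le_mul_one_sub_add_sq hmu0 hnu hmq
    exact ⟨⟨hmu.le, by linarith⟩, ⟨hmu.le, by nlinarith⟩, ⟨hmu.le, by linarith⟩,
      ⟨mul_nonneg hmu.le (by linarith), by linarith⟩⟩

lemma neg_one_le_and_div_le_iff (hmu0 : 0 ≤ mu) (hnu : nu < 1) :
    (-1 ≤ nu ∧ nu / (1 - nu + nu ^ 2) ≤ mu)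
    ↔ ((-1 ≤ nu ∧ nu ≤ 0) ∨ (0 < nu ∧ nu < 1 ∧ nu / (1 - nu + nu ^ 2) ≤ mu)) := by
  constructor
  · rintro ⟨hnu1, h⟩
    rcases le_or_gt nu 0 with hnu0 | hnu0
    · exact Or.inl ⟨hnu1, hnu0⟩
    · exact Or.inr ⟨hnu0, hnu, h⟩
  · rintro (⟨hnu1, hnu0⟩ | ⟨hnu0, -, h⟩)
    · exact ⟨hnu1, (div_nonpos_of_nonpos_of_nonneg hnu0 (one_sub_add_sq_pos nu).le).trans hmu0⟩
    · exact ⟨by linarith, h⟩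

lemma lt_one_of_gB_params_mem_unit (hmu1 : mu < 1) (hA : 0 ≤ (1 - mu) / (1 - nu))
    (hD : (1 - mu) * (1 + nu) / (1 - mu * nu) ≤ 1) : nu < 1 := by
  by_contra! hnu
  rcases hnu.eq_or_lt with rfl | hnu
  · rw [mul_one, mul_div_cancel_left₀ _ (sub_ne_zero.mpr hmu1.ne')] at hD
    norm_num at hD
  · exact (div_neg_of_pos_of_neg (sub_pos.mpr hmu1) (sub_neg.mpr hnu)).not_ge hA

end gBParams

/-- The four geometric-Bernoulli second parameters arising at q = 0 all lie in [0,1]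
iff the stated parameter conditions hold. -/
theorem stmt_11 (mu nu : ℝ) (hmu0 : 0 ≤ mu) (hmu1 : mu < 1) :
    ((0 ≤ (1 - mu) / (1 - nu) ∧ (1 - mu) / (1 - nu) ≤ 1)
      ∧ (0 ≤ (1 - mu) / (1 - mu * nu) ∧ (1 - mu) / (1 - mu * nu) ≤ 1)
      ∧ (0 ≤ (1 - mu) / ((1 - nu) * (1 - mu * nu))
          ∧ (1 - mu) / ((1 - nu) * (1 - mu * nu)) ≤ 1)
      ∧ (0 ≤ (1 - mu) * (1 + nu) / (1 - mu * nu)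
          ∧ (1 - mu) * (1 + nu) / (1 - mu * nu) ≤ 1))
    ↔ ((-1 ≤ nu ∧ nu ≤ 0) ∨ (0 < nu ∧ nu < 1 ∧ nu / (1 - nu + nu ^ 2) ≤ mu)) := by
  by_cases hnu : nu < 1
  · rw [gB_params_mem_unit_iff hmu0 hmu1 hnu, neg_one_le_and_div_le_iff hmu0 hnu]
  · refine iff_of_false (fun h => hnu (lt_one_of_gB_params_mem_unit hmu1 h.1.1 h.2.2.2.2)) ?_
    rintro (⟨-, h⟩ | ⟨-, h, -⟩) <;> linarith
end

section
/- Let 0 < r < 1 and x, y > 0 be real. Then (r q^y; q)_∞ / (r q^x; q)_∞ → (1−r)^{x−y} as q → 1−. -/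
open Filter Topology MeasureTheory
set_option maxHeartbeats 1000000

private lemma abs_log_one_sub_le {u c : ℝ} (hu0 : 0 ≤ u) (huc : u ≤ c) (hc : c < 1) :
    |Real.log (1 - u)| ≤ u / (1 - c) := by
  have h1 : 0 < 1 - u := by linarith
  have h2 : 0 < 1 - c := by linarith
  have hlog : Real.log (1 - u) ≤ 0 := Real.log_nonpos (by linarith) (by linarith)
  rw [abs_of_nonpos hlog, ← Real.log_inv]
  have := Real.log_le_sub_one_of_pos (x := (1 - u)⁻¹) (by positivity)
  have heq : (1 - u)⁻¹ - 1 = u / (1 - u) := by field_simp; ring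
  calc Real.log (1 - u)⁻¹ ≤ (1 - u)⁻¹ - 1 := this
    _ = u / (1 - u) := heq
    _ ≤ u / (1 - c) := by
        apply div_le_div_of_nonneg_left hu0 h2; linarith

private lemma qPochInf_eq_exp {a q : ℝ} (ha0 : 0 ≤ a) (ha1 : a < 1) (hq0 : 0 < q)
    (hq1 : q < 1) :
    qPochInf a q =
      Real.exp (-∑' k : ℕ, a ^ (k + 1) / ((k + 1) * (1 - q ^ (k + 1)))) := by
  have hqi : ∀ i : ℕ, 0 < q ^ i ∧ q ^ i ≤ 1 := fun i =>
    ⟨pow_pos hq0 i, pow_le_one₀ hq0.le hq1.le⟩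
  have haq : ∀ i : ℕ, 0 ≤ a * q ^ i ∧ a * q ^ i < 1 := by
    intro i
    refine ⟨by positivity, ?_⟩
    calc a * q ^ i ≤ a * 1 := mul_le_mul_of_nonneg_left (hqi i).2 ha0
      _ < 1 := by linarith
  have hpos : ∀ i : ℕ, 0 < 1 - a * q ^ i := fun i => by have := (haq i).2; linarith
  have hlogsum : Summable fun i : ℕ => Real.log (1 - a * q ^ i) := by
    apply Summable.of_norm_bounded (g := fun i : ℕ => (a / (1 - a)) * q ^ i)
    · exact (summable_geometric_of_lt_one hq0.le hq1).mul_left _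
    · intro i
      have := abs_log_one_sub_le (haq i).1 (by
        calc a * q ^ i ≤ a * 1 := mul_le_mul_of_nonneg_left (hqi i).2 ha0
          _ = a := mul_one a) ha1
      calc ‖Real.log (1 - a * q ^ i)‖ = |Real.log (1 - a * q ^ i)| := rfl
        _ ≤ a * q ^ i / (1 - a) := this
        _ = a / (1 - a) * q ^ i := by ring
  have hprod : qPochInf a q = Real.exp (∑' i : ℕ, Real.log (1 - a * q ^ i)) := by
    have := Real.rexp_tsum_eq_tprod (f := fun i => 1 - a * q ^ i)
      hpos hlogsum
    have h2 := this
    simpa [qPochInf, Function.comp] using h2.symm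
  rw [hprod]
  congr 1
  have hexp : ∀ i : ℕ, HasSum (fun k : ℕ => (a * q ^ i) ^ (k + 1) / (k + 1))
      (-Real.log (1 - a * q ^ i)) := fun i =>
    Real.hasSum_pow_div_log_of_abs_lt_one (by rw [abs_of_nonneg (haq i).1]; exact (haq i).2)
  have huncurry : Summable (fun p : ℕ × ℕ => (a * q ^ p.1) ^ (p.2 + 1) / (p.2 + 1 : ℝ)) := by
    refine Summable.of_nonneg_of_le (f := fun p : ℕ × ℕ => q ^ p.1 * a ^ (p.2 + 1))
      (fun p => by have := (haq p.1).1; positivity) ?_ ?_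
    · rintro ⟨i, k⟩
      simp only
      have h1 : (a * q ^ i) ^ (k + 1) / (k + 1 : ℝ) ≤ (a * q ^ i) ^ (k + 1) := by
        apply div_le_self (by positivity)
        have : (0:ℝ) ≤ (k:ℝ) := Nat.cast_nonneg k
        linarith
      refine h1.trans ?_
      rw [mul_pow]
      have h2 : (q ^ i) ^ (k + 1) ≤ q ^ i :=
        pow_le_of_le_one (hqi i).1.le (hqi i).2 (Nat.succ_ne_zero k)
      calc a ^ (k + 1) * (q ^ i) ^ (k + 1) ≤ a ^ (k + 1) * q ^ i :=
            mul_le_mul_of_nonneg_left h2 (by positivity)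
        _ = q ^ i * a ^ (k + 1) := by ring
    · exact Summable.mul_of_nonneg (f := fun i : ℕ => q ^ i) (g := fun k : ℕ => a ^ (k + 1))
        (summable_geometric_of_lt_one hq0.le hq1)
        (((summable_geometric_of_lt_one ha0 ha1).mul_left a).congr
          (fun k => by rw [pow_succ]; ring))
        (fun i => by positivity) (fun k => by positivity)
  set g : ℕ → ℕ → ℝ := fun i k => (a * q ^ i) ^ (k + 1) / (k + 1 : ℝ) with hgdef
  have huncurry' : Summable (Function.uncurry g) := huncurry
  have hinner : ∀ k : ℕ, ∑' i : ℕ, g i k = a ^ (k + 1) / ((k + 1) * (1 - q ^ (k + 1))) := by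
    intro k
    have hgeq : ∀ i : ℕ, g i k = a ^ (k + 1) / (k + 1 : ℝ) * (q ^ (k + 1)) ^ i := by
      intro i
      show (a * q ^ i) ^ (k + 1) / (k + 1 : ℝ) = _
      rw [mul_pow, ← pow_mul, ← pow_mul, Nat.mul_comm i (k+1)]
      ring
    have hq2 : q ^ (k + 1) < 1 := pow_lt_one₀ hq0.le hq1 (Nat.succ_ne_zero k)
    calc ∑' i : ℕ, g i k = ∑' i : ℕ, a ^ (k + 1) / (k + 1 : ℝ) * (q ^ (k + 1)) ^ i := by
          exact tsum_congr hgeq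
      _ = a ^ (k + 1) / (k + 1 : ℝ) * (1 - q ^ (k + 1))⁻¹ := by
          rw [tsum_mul_left, tsum_geometric_of_lt_one (by positivity) hq2]
      _ = a ^ (k + 1) / ((k + 1) * (1 - q ^ (k + 1))) := by
          rw [← div_eq_mul_inv, div_div]
  have hlog_eq : ∀ i : ℕ, Real.log (1 - a * q ^ i) = -∑' k : ℕ, g i k := by
    intro i
    rw [(hexp i).tsum_eq]
    simp
  calc ∑' i : ℕ, Real.log (1 - a * q ^ i) = ∑' i : ℕ, -∑' k : ℕ, g i k :=
        tsum_congr hlog_eq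
    _ = -∑' i : ℕ, ∑' k : ℕ, g i k := by rw [tsum_neg]
    _ = -∑' k : ℕ, ∑' i : ℕ, g i k := by rw [Summable.tsum_comm huncurry']
    _ = -∑' k : ℕ, a ^ (k + 1) / ((k + 1) * (1 - q ^ (k + 1))) := by
        rw [tsum_congr hinner]


private lemma summable_S {a q : ℝ} (ha0 : 0 ≤ a) (ha1 : a < 1) (hq0 : 0 < q) (hq1 : q < 1) :
    Summable fun k : ℕ => a ^ (k + 1) / ((k + 1) * (1 - q ^ (k + 1))) := by
  have hden : ∀ k : ℕ, 1 - q ≤ ((k:ℝ) + 1) * (1 - q ^ (k + 1)) := by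
    intro k
    have h1 : q ^ (k + 1) ≤ q := pow_le_of_le_one hq0.le hq1.le (Nat.succ_ne_zero k) |>.trans
      (le_of_eq rfl) |>.trans (le_refl q)
    have h2 : (1:ℝ) ≤ (k:ℝ) + 1 := by have := Nat.cast_nonneg (α := ℝ) k; linarith
    have h3 : q ^ (k + 1) < 1 := pow_lt_one₀ hq0.le hq1 (Nat.succ_ne_zero k)
    nlinarith
  refine Summable.of_nonneg_of_le (fun k => ?_) (fun k => ?_)
    ((summable_geometric_of_lt_one ha0 ha1).mul_left (a * (1 - q)⁻¹))
  · have h1 : 0 < 1 - q ^ (k + 1) := by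
      have h2 : q ^ (k + 1) < 1 := pow_lt_one₀ hq0.le hq1 (Nat.succ_ne_zero k); linarith
    positivity
  · have h0 : (0:ℝ) < 1 - q := by linarith
    calc a ^ (k + 1) / (((k:ℝ) + 1) * (1 - q ^ (k + 1)))
        ≤ a ^ (k + 1) / (1 - q) := by
          apply div_le_div_of_nonneg_left (by positivity) h0 (hden k)
      _ = a * (1 - q)⁻¹ * a ^ k := by rw [pow_succ]; ring



private lemma tendsto_one_sub_rpow_div' {c : ℝ} :
    Filter.Tendsto (fun q : ℝ => (1 - q ^ c) / (1 - q)) (nhdsWithin 1 (Set.Ioo 0 1))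
      (nhds c) := by
  have h : HasDerivAt (fun q : ℝ => q ^ c) (c * (1:ℝ) ^ (c - 1)) 1 :=
    Real.hasDerivAt_rpow_const (Or.inl one_ne_zero)
  rw [Real.one_rpow, mul_one] at h
  rw [hasDerivAt_iff_tendsto_slope] at h
  have h2 : Filter.Tendsto (slope (fun q : ℝ => q ^ c) 1) (nhdsWithin 1 (Set.Ioo 0 1))
      (nhds c) :=
    h.mono_left (nhdsWithin_mono 1 (fun q hq => ne_of_lt hq.2))
  refine h2.congr' ?_
  filter_upwards [self_mem_nhdsWithin] with q _
  rw [slope_def_field, Real.one_rpow]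
  rw [← neg_sub (q ^ c) 1, ← neg_sub q 1, neg_div_neg_eq]

private lemma one_sub_rpow_le' {u e : ℝ} (hu0 : 0 < u) (hu1 : u ≤ 1) :
    1 - u ^ e ≤ max 1 e * (1 - u) := by
  rcases le_total e 1 with h | h
  · have h1 : u ^ (1:ℝ) ≤ u ^ e := Real.rpow_le_rpow_of_exponent_ge hu0 hu1 h
    rw [Real.rpow_one] at h1
    have hmax : (1:ℝ) ≤ max 1 e := le_max_left _ _
    nlinarith
  · have hb := one_add_mul_self_le_rpow_one_add (s := u - 1) (by linarith) h
    have he1 : (1:ℝ) + (u - 1) = u := by ring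
    rw [he1] at hb
    have hmax : e ≤ max 1 e := le_max_right _ _
    nlinarith

private lemma tendsto_Fk (r x y : ℝ) (hx : 0 < x) (hy : 0 < y) (k : ℕ) :
    Filter.Tendsto (fun q : ℝ =>
        r ^ (k + 1) * (q ^ (x * ((k : ℝ) + 1)) - q ^ (y * ((k : ℝ) + 1))) /
          (((k : ℝ) + 1) * (1 - q ^ (k + 1))))
      (nhdsWithin 1 (Set.Ioo 0 1)) (nhds (r ^ (k + 1) / ((k : ℝ) + 1) * (y - x))) := by
  set c : ℝ := (k : ℝ) + 1 with hc
  have hc0 : (0:ℝ) < c := by positivity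
  have hnum : Filter.Tendsto
      (fun q : ℝ => r ^ (k + 1) * ((1 - q ^ (y * c)) / (1 - q) - (1 - q ^ (x * c)) / (1 - q)))
      (nhdsWithin 1 (Set.Ioo 0 1)) (nhds (r ^ (k + 1) * (y * c - x * c))) :=
    (tendsto_one_sub_rpow_div'.sub tendsto_one_sub_rpow_div').const_mul _
  have hden : Filter.Tendsto (fun q : ℝ => c * ((1 - q ^ c) / (1 - q)))
      (nhdsWithin 1 (Set.Ioo 0 1)) (nhds (c * c)) :=
    tendsto_one_sub_rpow_div'.const_mul c
  have hdiv := hnum.div hden (by positivity)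
  have hlim : r ^ (k + 1) * (y * c - x * c) / (c * c) = r ^ (k + 1) / c * (y - x) := by
    field_simp
  rw [hlim] at hdiv
  refine Filter.Tendsto.congr' ?_ hdiv
  filter_upwards [self_mem_nhdsWithin] with q hq
  obtain ⟨hq0, hq1⟩ := hq
  simp only [Pi.div_apply]
  have h1q : (1:ℝ) - q ≠ 0 := by intro h; nlinarith
  have hqm1 : q ^ (k + 1) < 1 := pow_lt_one₀ hq0.le hq1 (Nat.succ_ne_zero k)
  have hqm : (1:ℝ) - q ^ (k + 1) ≠ 0 := by intro h; nlinarith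
  have hqc : q ^ c = q ^ (k + 1) := by
    rw [hc]
    rw [show (k : ℝ) + 1 = ((k + 1 : ℕ) : ℝ) by push_cast; ring, Real.rpow_natCast]
  rw [hqc]
  field_simp
  ring

private lemma Fk_bound (r x y : ℝ) (hr0 : 0 < r) (hx : 0 < x) (hy : 0 < y)
    {q : ℝ} (hq0 : 0 < q) (hq1 : q < 1) (k : ℕ) :
    |r ^ (k + 1) * (q ^ (x * ((k : ℝ) + 1)) - q ^ (y * ((k : ℝ) + 1))) /
        (((k : ℝ) + 1) * (1 - q ^ (k + 1)))|
      ≤ max 1 |x - y| * r ^ (k + 1) := by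
  set c : ℝ := (k : ℝ) + 1 with hc
  have hc1 : (1:ℝ) ≤ c := by have := Nat.cast_nonneg (α := ℝ) k; rw [hc]; linarith
  have hqm1 : q ^ (k + 1) < 1 := pow_lt_one₀ hq0.le hq1 (Nat.succ_ne_zero k)
  have hqm0 : (0:ℝ) < 1 - q ^ (k + 1) := by linarith
  have hqc : q ^ c = q ^ (k + 1) := by
    rw [hc, show (k : ℝ) + 1 = ((k + 1 : ℕ) : ℝ) by push_cast; ring, Real.rpow_natCast]
  -- the key estimate on the numerator
  have key : ∀ s t : ℝ, 0 < s → 0 < t → s ≤ t →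
      q ^ (s * c) - q ^ (t * c) ≤ max 1 (t - s) * (1 - q ^ (k + 1)) := by
    intro s t hs ht hst
    have h1 : q ^ (t * c) = q ^ (s * c) * (q ^ c) ^ (t - s) := by
      rw [← Real.rpow_mul hq0.le, ← Real.rpow_add hq0]
      congr 1
      ring
    have hsc1 : q ^ (s * c) ≤ 1 :=
      Real.rpow_le_one hq0.le hq1.le (by positivity)
    have hqcpos : 0 < q ^ c := Real.rpow_pos_of_pos hq0 c
    have hqcle : q ^ c ≤ 1 := Real.rpow_le_one hq0.le hq1.le (by positivity)
    have h2 : 1 - (q ^ c) ^ (t - s) ≤ max 1 (t - s) * (1 - q ^ c) :=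
      one_sub_rpow_le' hqcpos hqcle
    have h3 : (q ^ c) ^ (t - s) ≤ 1 := Real.rpow_le_one hqcpos.le hqcle (by linarith)
    have h4 : 0 < (q ^ c) ^ (t - s) := Real.rpow_pos_of_pos hqcpos _
    calc q ^ (s * c) - q ^ (t * c) = q ^ (s * c) * (1 - (q ^ c) ^ (t - s)) := by
          rw [h1]; ring
      _ ≤ 1 - (q ^ c) ^ (t - s) := by nlinarith
      _ ≤ max 1 (t - s) * (1 - q ^ c) := h2
      _ = max 1 (t - s) * (1 - q ^ (k + 1)) := by rw [hqc]
  have habs : |q ^ (x * c) - q ^ (y * c)| ≤ max 1 |x - y| * (1 - q ^ (k + 1)) := by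
    rcases le_total x y with h | h
    · rw [abs_of_nonneg (by
        have : q ^ (y * c) ≤ q ^ (x * c) :=
          Real.rpow_le_rpow_of_exponent_ge hq0 hq1.le
            (mul_le_mul_of_nonneg_right h (by linarith))
        linarith)]
      have := key x y hx hy h
      rwa [show |x - y| = y - x by rw [abs_sub_comm]; exact abs_of_nonneg (by linarith)]
    · rw [abs_sub_comm, abs_of_nonneg (by
        have : q ^ (x * c) ≤ q ^ (y * c) :=
          Real.rpow_le_rpow_of_exponent_ge hq0 hq1.le
            (mul_le_mul_of_nonneg_right h (by linarith))
        linarith)]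
      have := key y x hy hx h
      rwa [show |x - y| = x - y from abs_of_nonneg (by linarith)]
  have hM0 : (0:ℝ) ≤ max 1 |x - y| := le_trans zero_le_one (le_max_left _ _)
  calc |r ^ (k + 1) * (q ^ (x * c) - q ^ (y * c)) / (c * (1 - q ^ (k + 1)))|
      = r ^ (k + 1) * |q ^ (x * c) - q ^ (y * c)| / (c * (1 - q ^ (k + 1))) := by
        rw [abs_div, abs_mul, abs_of_nonneg (by positivity : (0:ℝ) ≤ r ^ (k + 1)),
          abs_of_pos (by positivity : (0:ℝ) < c * (1 - q ^ (k + 1)))]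
    _ ≤ r ^ (k + 1) * (max 1 |x - y| * (1 - q ^ (k + 1))) / (c * (1 - q ^ (k + 1))) := by
        gcongr
    _ = max 1 |x - y| * r ^ (k + 1) / c := by
        field_simp
    _ ≤ max 1 |x - y| * r ^ (k + 1) := by
        apply div_le_self (by positivity) hc1

/-- Ratio of infinite q-Pochhammer symbols converges as q → 1-. -/
theorem stmt_13 (r x y : ℝ) (hr0 : 0 < r) (hr1 : r < 1) (hx : 0 < x) (hy : 0 < y) :
    Filter.Tendsto (fun q : ℝ => qPochInf (r * q ^ y) q / qPochInf (r * q ^ x) q)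
      (nhdsWithin 1 (Set.Ioo 0 1)) (nhds ((1 - r) ^ (x - y))) := by
  set F : ℝ → ℕ → ℝ := fun q k =>
    r ^ (k + 1) * (q ^ (x * ((k : ℝ) + 1)) - q ^ (y * ((k : ℝ) + 1))) /
      (((k : ℝ) + 1) * (1 - q ^ (k + 1))) with hF
  have hDCT : Filter.Tendsto (fun q => ∑' k, F q k) (nhdsWithin 1 (Set.Ioo 0 1))
      (nhds (∑' k : ℕ, r ^ (k + 1) / ((k : ℝ) + 1) * (y - x))) := by
    apply tendsto_tsum_of_dominated_convergence
      (bound := fun k : ℕ => max 1 |x - y| * r ^ (k + 1))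
    · exact ((summable_geometric_of_lt_one hr0.le hr1).mul_left (max 1 |x - y| * r)).congr
        (fun k => by rw [pow_succ]; ring)
    · exact fun k => tendsto_Fk r x y hx hy k
    · filter_upwards [self_mem_nhdsWithin] with q hq
      exact fun k => Fk_bound r x y hr0 hx hy hq.1 hq.2 k
  have h1r : (0:ℝ) < 1 - r := by linarith
  have hsum_val : ∑' k : ℕ, r ^ (k + 1) / ((k : ℝ) + 1) * (y - x)
      = (x - y) * Real.log (1 - r) := by
    have h := (Real.hasSum_pow_div_log_of_abs_lt_one (x := r)
      (by rwa [abs_of_pos hr0])).tsum_eq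
    rw [tsum_mul_right]
    have h2 : ∑' k : ℕ, r ^ (k + 1) / ((k : ℝ) + 1) = -Real.log (1 - r) := by
      rw [← h]
    rw [h2]; ring
  rw [hsum_val] at hDCT
  have hexp := (Real.continuous_exp.tendsto _).comp hDCT
  have htarget : Real.exp ((x - y) * Real.log (1 - r)) = (1 - r) ^ (x - y) := by
    rw [Real.rpow_def_of_pos h1r, mul_comm]
  rw [htarget] at hexp
  refine Filter.Tendsto.congr' ?_ hexp
  filter_upwards [self_mem_nhdsWithin] with q hq
  obtain ⟨hq0, hq1⟩ := hq
  have hqt : ∀ t : ℝ, 0 < t → 0 ≤ r * q ^ t ∧ r * q ^ t < 1 := by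
    intro t ht
    have hq1t : q ^ t < 1 := Real.rpow_lt_one hq0.le hq1 ht
    have hqt0 : 0 < q ^ t := Real.rpow_pos_of_pos hq0 t
    constructor
    · positivity
    · nlinarith
  have hax := hqt x hx
  have hay := hqt y hy
  simp only [Function.comp]
  rw [qPochInf_eq_exp hay.1 hay.2 hq0 hq1, qPochInf_eq_exp hax.1 hax.2 hq0 hq1,
    ← Real.exp_sub, neg_sub_neg]
  congr 1
  rw [← Summable.tsum_sub (summable_S hax.1 hax.2 hq0 hq1) (summable_S hay.1 hay.2 hq0 hq1)]
  apply tsum_congr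
  intro k
  have hpow : ∀ t : ℝ, (r * q ^ t) ^ (k + 1) = r ^ (k + 1) * q ^ (t * ((k : ℝ) + 1)) := by
    intro t
    rw [mul_pow, ← Real.rpow_natCast (q ^ t) (k + 1), ← Real.rpow_mul hq0.le]
    push_cast
    ring_nf
  rw [hpow x, hpow y, div_sub_div_same, hF]
  ring
end

section
/- Let q = e^{−ε}, μ = e^{−μ̄ε}, ν = e^{−ν̄ε} with 0 < μ̄ < ν̄ fixed. As ε → 0+, ε^{−1} · μ^{⌈t/ε⌉} (ν/μ;q)_{⌈t/ε⌉} (μ;q)_∞ / ((q;q)_{⌈t/ε⌉} (ν;q)_∞) → e^{−tμ̄}(1−e^{−t})^{ν̄−μ̄−1} Γ(ν̄) / (Γ(μ̄)Γ(ν̄−μ̄)) for any fixed t > 0; i.e., the rescaled φ_{q,μ,ν}(·|∞) weights converge to the density of a (logarithmic) Beta(μ̄, ν̄−μ̄)-type distribution: if X_ε ∼ φ_{q,μ,ν}(·|∞), then exp(−εX_ε) converges in distribution to Beta(μ̄, ν̄−μ̄). -/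
open Filter Topology MeasureTheory

open Real Filter Topology Set Finset

namespace S14

noncomputable def psiF (x : ℝ) : ℝ := Real.log (1 - Real.exp (-x))
noncomputable def phiF (x : ℝ) : ℝ := psiF x - Real.log x

lemma one_sub_pos {x : ℝ} (hx : 0 < x) : 0 < 1 - Real.exp (-x) := by
  have : Real.exp (-x) < 1 := by
    rw [Real.exp_lt_one_iff]; linarith
  linarith

lemma one_sub_lt_one {x : ℝ} (hx : 0 < x) : 1 - Real.exp (-x) < 1 := by
  have := Real.exp_pos (-x); linarith

lemma psiF_neg {x : ℝ} (hx : 0 < x) : psiF x < 0 :=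
  Real.log_neg (one_sub_pos hx) (one_sub_lt_one hx)

lemma psiF_mono {x y : ℝ} (hx : 0 < x) (hxy : x ≤ y) : psiF x ≤ psiF y := by
  apply Real.log_le_log (one_sub_pos hx)
  have : Real.exp (-y) ≤ Real.exp (-x) := Real.exp_le_exp.2 (by linarith)
  linarith

lemma exp_psiF {x : ℝ} (hx : 0 < x) : Real.exp (psiF x) = 1 - Real.exp (-x) :=
  Real.exp_log (one_sub_pos hx)

lemma exp_phiF {x : ℝ} (hx : 0 < x) : Real.exp (phiF x) = (1 - Real.exp (-x)) / x := by
  rw [phiF, Real.exp_sub, exp_psiF hx, Real.exp_log hx]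

lemma one_sub_eq {x : ℝ} (hx : 0 < x) : 1 - Real.exp (-x) = x * Real.exp (phiF x) := by
  rw [exp_phiF hx]; field_simp

lemma continuousAt_psiF {x : ℝ} (hx : 0 < x) : ContinuousAt psiF x := by
  apply ContinuousAt.log
  · fun_prop
  · exact ne_of_gt (one_sub_pos hx)

lemma continuousAt_phiF {x : ℝ} (hx : 0 < x) : ContinuousAt phiF x :=
  (continuousAt_psiF hx).sub (Real.continuousAt_log (ne_of_gt hx))

lemma tendsto_psiF_atTop {ε : ℝ} (hε : 0 < ε) (x : ℝ) :
    Tendsto (fun m : ℕ => psiF (x + ε * m)) atTop (𝓝 0) := by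
  have h1 : Tendsto (fun m : ℕ => Real.exp (-ε) ^ m) atTop (𝓝 0) :=
    tendsto_pow_atTop_nhds_zero_of_lt_one (Real.exp_nonneg _)
      (by rw [Real.exp_lt_one_iff]; linarith)
  have h2 : Tendsto (fun m : ℕ => 1 - Real.exp (-x) * Real.exp (-ε) ^ m) atTop (𝓝 1) := by
    have := (h1.const_mul (Real.exp (-x))).const_sub 1
    simpa using this
  have h3 : Tendsto (fun m : ℕ => Real.log (1 - Real.exp (-x) * Real.exp (-ε) ^ m)) atTop
      (𝓝 0) := by
    have := (Real.continuousAt_log (by norm_num : (1:ℝ) ≠ 0)).tendsto.comp h2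
    simpa [Function.comp_def] using this
  convert h3 using 2 with m
  rw [psiF, ← Real.exp_nat_mul]
  rw [← Real.exp_add]
  congr 1
  ring

lemma tendsto_phiF_zero : Tendsto phiF (𝓝[>] 0) (𝓝 0) := by
  have hd : HasDerivAt (fun y : ℝ => 1 - Real.exp (-y)) 1 0 := by
    have : HasDerivAt (fun y : ℝ => Real.exp (-y)) (-1) 0 := by
      simpa [Function.comp_def] using (Real.hasDerivAt_exp (-0)).comp 0 (hasDerivAt_neg 0)
    simpa using this.const_sub 1
  have hs : Tendsto (fun x => (1 - Real.exp (-x)) / x) (𝓝[>] 0) (𝓝 1) := by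
    have := (hasDerivAt_iff_tendsto_slope.1 hd).mono_left
      (nhdsWithin_mono 0 (by intro x hx; exact ne_of_gt hx : Ioi (0:ℝ) ⊆ {0}ᶜ))
    apply this.congr'
    filter_upwards [self_mem_nhdsWithin] with x hx
    simp [slope, div_eq_inv_mul]
  have : Tendsto (fun x => Real.log ((1 - Real.exp (-x)) / x)) (𝓝[>] 0) (𝓝 0) := by
    have := (Real.continuousAt_log (by norm_num : (1:ℝ) ≠ 0)).tendsto.comp hs
    simpa [Function.comp_def] using this
  apply this.congr'
  filter_upwards [self_mem_nhdsWithin] with x hx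
  rw [Real.log_div (ne_of_gt (one_sub_pos hx)) (ne_of_gt hx)]
  rfl



noncomputable def psiD (x : ℝ) : ℝ := Real.exp (-x) / (1 - Real.exp (-x))
noncomputable def phiD (x : ℝ) : ℝ := psiD x - x⁻¹

lemma hasDerivAt_inner {x : ℝ} : HasDerivAt (fun y : ℝ => 1 - Real.exp (-y)) (Real.exp (-x)) x := by
  have h : HasDerivAt (fun y : ℝ => Real.exp (-y)) (-Real.exp (-x)) x := by
    simpa [Function.comp_def] using (Real.hasDerivAt_exp (-x)).comp x (hasDerivAt_neg x)
  simpa using h.const_sub 1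

lemma hasDerivAt_psiF {x : ℝ} (hx : 0 < x) : HasDerivAt psiF (psiD x) x := by
  have := (hasDerivAt_inner (x := x)).log (ne_of_gt (one_sub_pos hx))
  rw [psiD]; exact this

lemma hasDerivAt_phiF {x : ℝ} (hx : 0 < x) : HasDerivAt phiF (phiD x) x :=
  (hasDerivAt_psiF hx).sub (Real.hasDerivAt_log (ne_of_gt hx))

lemma psiD_eq {x : ℝ} (hx : 0 < x) : psiD x = (Real.exp x - 1)⁻¹ := by
  rw [psiD]
  have h1 : Real.exp x ≠ 0 := Real.exp_ne_zero x
  have h2 : (0:ℝ) < Real.exp x - 1 := by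
    have : 1 < Real.exp x := by
      rw [← Real.exp_zero]; exact Real.exp_lt_exp.2 hx
    linarith
  rw [Real.exp_neg]
  field_simp

lemma psiD_anti : AntitoneOn psiD (Ioi 0) := by
  intro x hx y hy hxy
  simp only [Set.mem_Ioi] at hx hy
  rw [psiD_eq hx, psiD_eq hy]
  have h2 : (0:ℝ) < Real.exp x - 1 := by
    have : 1 < Real.exp x := by
      rw [← Real.exp_zero]; exact Real.exp_lt_exp.2 hx
    linarith
  have h3 : Real.exp x - 1 ≤ Real.exp y - 1 := by
    have := Real.exp_le_exp.2 hxy; linarith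
  gcongr

lemma hasDerivAt_psiD {x : ℝ} (hx : 0 < x) :
    HasDerivAt psiD (-(Real.exp (-x) / (1 - Real.exp (-x)) ^ 2)) x := by
  have h : HasDerivAt (fun y : ℝ => Real.exp (-y)) (-Real.exp (-x)) x := by
    simpa [Function.comp_def] using (Real.hasDerivAt_exp (-x)).comp x (hasDerivAt_neg x)
  have := h.div hasDerivAt_inner (ne_of_gt (one_sub_pos hx))
  refine (this : HasDerivAt psiD _ x).congr_deriv ?_
  have h1 := one_sub_pos hx
  field_simp [psiD]
  ring

lemma hasDerivAt_phiD {x : ℝ} (hx : 0 < x) :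
    HasDerivAt phiD ((x ^ 2)⁻¹ - Real.exp (-x) / (1 - Real.exp (-x)) ^ 2) x := by
  have := (hasDerivAt_psiD hx).sub (hasDerivAt_inv (ne_of_gt hx))
  refine (this : HasDerivAt phiD _ x).congr_deriv ?_
  ring

lemma key_ineq {x : ℝ} (hx : 0 < x) :
    Real.exp (-x) / (1 - Real.exp (-x)) ^ 2 ≤ (x ^ 2)⁻¹ := by
  have hs : x / 2 ≤ Real.sinh (x / 2) := Real.self_le_sinh_iff.2 (by linarith)
  rw [Real.sinh_eq] at hs
  have he : (0:ℝ) < Real.exp (-(x/2)) := Real.exp_pos _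
  have h1 : x * Real.exp (-(x/2)) ≤ 1 - Real.exp (-x) := by
    have := mul_le_mul_of_nonneg_right hs he.le
    have e1 : Real.exp (x/2) * Real.exp (-(x/2)) = 1 := by
      rw [← Real.exp_add]; simp
    have e2 : Real.exp (-(x/2)) * Real.exp (-(x/2)) = Real.exp (-x) := by
      rw [← Real.exp_add]; congr 1; ring
    nlinarith [this]
  have h2 : x ^ 2 * Real.exp (-x) ≤ (1 - Real.exp (-x)) ^ 2 := by
    have hl : 0 ≤ x * Real.exp (-(x/2)) := by positivity
    have := mul_self_le_mul_self hl h1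
    have e2 : Real.exp (-(x/2)) * Real.exp (-(x/2)) = Real.exp (-x) := by
      rw [← Real.exp_add]; congr 1; ring
    nlinarith [this]
  rw [inv_eq_one_div, div_le_div_iff₀ (pow_pos (one_sub_pos hx) 2) (by positivity : (0:ℝ) < x^2)]
  nlinarith [h2]

lemma phiD_mono : MonotoneOn phiD (Ioi 0) := by
  apply monotoneOn_of_deriv_nonneg (convex_Ioi 0)
  · intro x hx
    exact (hasDerivAt_phiD hx).continuousAt.continuousWithinAt
  · intro x hx
    rw [interior_Ioi] at hx
    exact (hasDerivAt_phiD hx).differentiableAt.differentiableWithinAt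
  · intro x hx
    rw [interior_Ioi] at hx
    rw [(hasDerivAt_phiD hx).deriv]
    have := key_ineq hx
    linarith

lemma phiF_convex : ConvexOn ℝ (Ioi 0) phiF := by
  apply MonotoneOn.convexOn_of_deriv (convex_Ioi 0)
  · intro x hx
    exact (hasDerivAt_phiF hx).continuousAt.continuousWithinAt
  · intro x hx
    rw [interior_Ioi] at hx
    exact (hasDerivAt_phiF hx).differentiableAt.differentiableWithinAt
  · intro x hx y hy hxy
    rw [interior_Ioi] at hx hy
    rw [(hasDerivAt_phiF hx).deriv, (hasDerivAt_phiF hy).deriv]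
    exact phiD_mono hx hy hxy

lemma psiF_concave : ConcaveOn ℝ (Ioi 0) psiF := by
  apply AntitoneOn.concaveOn_of_deriv (convex_Ioi 0)
  · intro x hx
    exact (hasDerivAt_psiF hx).continuousAt.continuousWithinAt
  · intro x hx
    rw [interior_Ioi] at hx
    exact (hasDerivAt_psiF hx).differentiableAt.differentiableWithinAt
  · intro x hx y hy hxy
    rw [interior_Ioi] at hx hy
    rw [(hasDerivAt_psiF hx).deriv, (hasDerivAt_psiF hy).deriv]
    exact psiD_anti hx hy hxy

lemma convex_cross {f : ℝ → ℝ} (hf : ConvexOn ℝ (Ioi 0) f) {u v p q : ℝ}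
    (hu : 0 < u) (huv : u < v) (hp : 0 < p) (hpq : p < q) (hup : u ≤ p) (hvq : v ≤ q) :
    (f v - f u) * (q - p) ≤ (f q - f p) * (v - u) := by
  have hq : (0:ℝ) < q := lt_of_lt_of_le (lt_of_lt_of_le hu hup) hpq.le
  have hv : (0:ℝ) < v := hu.trans huv
  have s1 : (f v - f u) / (v - u) ≤ (f q - f u) / (q - u) := by
    apply hf.secant_mono (Set.mem_Ioi.2 hu) (Set.mem_Ioi.2 hv) (Set.mem_Ioi.2 hq)
      (ne_of_gt huv) (ne_of_gt (lt_of_lt_of_le huv hvq)) hvq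
  have s2 : (f q - f u) / (q - u) ≤ (f q - f p) / (q - p) := by
    have := hf.secant_mono (Set.mem_Ioi.2 hq) (Set.mem_Ioi.2 hu) (Set.mem_Ioi.2 hp)
      (ne_of_lt (lt_of_le_of_lt hup hpq)) (ne_of_lt hpq) hup
    calc (f q - f u) / (q - u) = (f u - f q) / (u - q) := by
            rw [← neg_div_neg_eq]; ring_nf
      _ ≤ (f p - f q) / (p - q) := this
      _ = (f q - f p) / (q - p) := by rw [← neg_div_neg_eq]; ring_nf
  have := s1.trans s2
  rwa [div_le_div_iff₀ (by linarith) (by linarith)] at this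

lemma concave_cross {f : ℝ → ℝ} (hf : ConcaveOn ℝ (Ioi 0) f) {u v p q : ℝ}
    (hu : 0 < u) (huv : u < v) (hp : 0 < p) (hpq : p < q) (hup : u ≤ p) (hvq : v ≤ q) :
    (f q - f p) * (v - u) ≤ (f v - f u) * (q - p) := by
  have := convex_cross hf.neg hu huv hp hpq hup hvq
  simp only [Pi.neg_apply] at this
  nlinarith [this]



lemma tendsto_mul_pos {b : ℝ} (hb : 0 < b) :
    Tendsto (fun ε : ℝ => ε * b) (𝓝[>] 0) (𝓝[>] 0) := by
  apply tendsto_nhdsWithin_of_tendsto_nhds_of_eventually_within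
  · have : Continuous fun ε : ℝ => ε * b := by fun_prop
    simpa using (this.tendsto 0).mono_left nhdsWithin_le_nhds
  · filter_upwards [self_mem_nhdsWithin] with ε hε
    exact mul_pos hε hb

lemma tendsto_eps_ceil {t : ℝ} (ht : 0 < t) :
    Tendsto (fun ε : ℝ => ε * (⌈t/ε⌉₊ : ℝ)) (𝓝[>] 0) (𝓝 t) := by
  have hup : Tendsto (fun ε : ℝ => t + ε) (𝓝[>] 0) (𝓝 t) := by
    simpa [Pi.add_def] using ((continuous_const.add continuous_id).tendsto (0:ℝ)).mono_left
      (nhdsWithin_le_nhds (s := Ioi (0:ℝ)))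
  apply tendsto_of_tendsto_of_tendsto_of_le_of_le' tendsto_const_nhds hup
  · filter_upwards [self_mem_nhdsWithin] with ε hε
    have hε0 : (0:ℝ) < ε := hε
    have h1 : t/ε ≤ (⌈t/ε⌉₊ : ℝ) := Nat.le_ceil _
    have h2 : ε * (t/ε) = t := by field_simp
    nlinarith
  · filter_upwards [self_mem_nhdsWithin] with ε hε
    have hε0 : (0:ℝ) < ε := hε
    have h1 : (⌈t/ε⌉₊ : ℝ) < t/ε + 1 := Nat.ceil_lt_add_one (le_of_lt (div_pos ht hε))
    have h2 : ε * (t/ε) = t := by field_simp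
    nlinarith

lemma tendsto_arg_shift {t : ℝ} (c : ℝ) (ht : 0 < t) :
    Tendsto (fun ε : ℝ => ε * (c + (⌈t/ε⌉₊ : ℝ))) (𝓝[>] 0) (𝓝 t) := by
  have h1 : Tendsto (fun ε : ℝ => ε * c) (𝓝[>] 0) (𝓝 0) := by
    have : Continuous fun ε : ℝ => ε * c := by fun_prop
    simpa using (this.tendsto 0).mono_left nhdsWithin_le_nhds
  have := h1.add (tendsto_eps_ceil ht)
  rw [zero_add] at this
  apply this.congr
  intro ε; ring

lemma phi_step_low' {ε A B C C' k : ℝ} (hε : 0 < ε) (hC : 0 < C) (hCA : C ≤ A)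
    (hCB : C' ≤ B) (hAB : A < B) (hCC' : C' = C + 1) (hk : k = B - A) :
    k * (phiF (ε * C') - phiF (ε * C)) ≤ phiF (ε * B) - phiF (ε * A) := by
  subst hCC' hk
  have h := convex_cross phiF_convex (u := ε * C) (v := ε * (C+1)) (p := ε * A) (q := ε * B)
    (mul_pos hε hC) (by nlinarith) (by nlinarith) (by nlinarith)
    (by nlinarith) (by nlinarith)
  have e1 : (phiF (ε*(C+1)) - phiF (ε*C)) * (ε*B - ε*A)
      = ε * ((B - A) * (phiF (ε*(C+1)) - phiF (ε*C))) := by ring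
  have e2 : (phiF (ε*B) - phiF (ε*A)) * (ε*(C+1) - ε*C)
      = ε * (phiF (ε*B) - phiF (ε*A)) := by ring
  rw [e1, e2] at h
  exact le_of_mul_le_mul_left h hε

lemma phi_step_high' {ε A B D D' k : ℝ} (hε : 0 < ε) (hA : 0 < A) (hAB : A < B)
    (hAD : A ≤ D) (hBD : B ≤ D') (hDD' : D' = D + 1) (hk : k = B - A) :
    phiF (ε * B) - phiF (ε * A) ≤ k * (phiF (ε * D') - phiF (ε * D)) := by
  subst hDD' hk
  have h := convex_cross phiF_convex (u := ε * A) (v := ε * B) (p := ε * D) (q := ε * (D+1))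
    (mul_pos hε hA) (by nlinarith) (by nlinarith) (by nlinarith)
    (by nlinarith) (by nlinarith)
  have e1 : (phiF (ε*B) - phiF (ε*A)) * (ε*(D+1) - ε*D)
      = ε * (phiF (ε*B) - phiF (ε*A)) := by ring
  have e2 : (phiF (ε*(D+1)) - phiF (ε*D)) * (ε*B - ε*A)
      = ε * ((B - A) * (phiF (ε*(D+1)) - phiF (ε*D))) := by ring
  rw [e1, e2] at h
  exact le_of_mul_le_mul_left h hε

lemma psi_step_high' {ε A B C C' k : ℝ} (hε : 0 < ε) (hC : 0 < C) (hCA : C ≤ A)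
    (hCB : C' ≤ B) (hAB : A < B) (hCC' : C' = C + 1) (hk : k = B - A) :
    psiF (ε * B) - psiF (ε * A) ≤ k * (psiF (ε * C') - psiF (ε * C)) := by
  subst hCC' hk
  have h := concave_cross psiF_concave (u := ε * C) (v := ε * (C+1)) (p := ε * A) (q := ε * B)
    (mul_pos hε hC) (by nlinarith) (by nlinarith) (by nlinarith)
    (by nlinarith) (by nlinarith)
  have e1 : (psiF (ε*B) - psiF (ε*A)) * (ε*(C+1) - ε*C)
      = ε * (psiF (ε*B) - psiF (ε*A)) := by ring
  have e2 : (psiF (ε*(C+1)) - psiF (ε*C)) * (ε*B - ε*A)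
      = ε * ((B - A) * (psiF (ε*(C+1)) - psiF (ε*C))) := by ring
  rw [e1, e2] at h
  exact le_of_mul_le_mul_left h hε

lemma psi_step_low' {ε A B D D' k : ℝ} (hε : 0 < ε) (hA : 0 < A) (hAB : A < B)
    (hAD : A ≤ D) (hBD : B ≤ D') (hDD' : D' = D + 1) (hk : k = B - A) :
    k * (psiF (ε * D') - psiF (ε * D)) ≤ psiF (ε * B) - psiF (ε * A) := by
  subst hDD' hk
  have h := concave_cross psiF_concave (u := ε * A) (v := ε * B) (p := ε * D) (q := ε * (D+1))
    (mul_pos hε hA) (by nlinarith) (by nlinarith) (by nlinarith)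
    (by nlinarith) (by nlinarith)
  have e1 : (psiF (ε*(D+1)) - psiF (ε*D)) * (ε*B - ε*A)
      = ε * ((B - A) * (psiF (ε*(D+1)) - psiF (ε*D))) := by ring
  have e2 : (psiF (ε*B) - psiF (ε*A)) * (ε*(D+1) - ε*D)
      = ε * (psiF (ε*B) - psiF (ε*A)) := by ring
  rw [e1, e2] at h
  exact le_of_mul_le_mul_left h hε

lemma tele_hasSum {ε y : ℝ} (hε : 0 < ε) (hy : 0 < y) :
    HasSum (fun i : ℕ => psiF (ε*(y+↑i+1)) - psiF (ε*(y+↑i))) (-psiF (ε*y)) := by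
  have hnn : ∀ i : ℕ, 0 ≤ psiF (ε*(y+↑i+1)) - psiF (ε*(y+↑i)) := by
    intro i
    have h1 : (0:ℝ) < ε*(y+↑i) := by positivity
    refine sub_nonneg.2 (psiF_mono h1 ?_)
    nlinarith
  rw [hasSum_iff_tendsto_nat_of_nonneg hnn]
  have hsum : ∀ m : ℕ, ∑ i ∈ Finset.range m, (psiF (ε*(y+↑i+1)) - psiF (ε*(y+↑i)))
      = psiF (ε*(y+↑m)) - psiF (ε*(y+↑(0:ℕ))) := by
    intro m
    have h : ∑ i ∈ Finset.range m, (psiF (ε*(y+↑(i+1))) - psiF (ε*(y+↑i)))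
        = psiF (ε*(y+↑m)) - psiF (ε*(y+↑(0:ℕ))) := by
      exact Finset.sum_range_sub (fun j : ℕ => psiF (ε*(y+(j:ℝ)))) m
    rw [← h]
    apply Finset.sum_congr rfl
    intro i _
    have e : y + (↑i:ℝ) + 1 = y + ↑(i+1) := by push_cast; ring
    rw [e]
  have hlim : Tendsto (fun m : ℕ => psiF (ε*(y+↑m)) - psiF (ε*(y+↑(0:ℕ)))) atTop
      (𝓝 (-psiF (ε*y))) := by
    have h0 : Tendsto (fun m : ℕ => psiF (ε*y + ε*↑m)) atTop (𝓝 0) := tendsto_psiF_atTop hε (ε*y)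
    have h1 : Tendsto (fun m : ℕ => psiF (ε*(y+↑m))) atTop (𝓝 0) := by
      apply h0.congr; intro m; congr 1; ring
    have := h1.sub_const (psiF (ε*(y+↑(0:ℕ))))
    rw [zero_sub] at this
    convert this using 2
    simp
  exact hlim.congr (fun m => (hsum m).symm)

set_option maxHeartbeats 1000000 in
lemma sumS {a b t : ℝ} (ha : 0 < a) (hab : a < b) (ht : 0 < t) :
    Tendsto (fun ε : ℝ => ∑ i ∈ Finset.range (⌈t/ε⌉₊),
      (phiF (ε*(b+↑i)) - phiF (ε*(a+↑i)))) (𝓝[>] 0) (𝓝 ((b-a) * phiF t)) := by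
  have hb : (0:ℝ) < b := ha.trans hab
  set c := min a (b-1) with hcdef
  set d := max a (b-1) with hddef
  have hc1 : -1 < c := lt_min (by linarith) (by linarith)
  have hc2 : c ≤ a := min_le_left _ _
  have hc3 : c + 1 ≤ b := by have := min_le_right a (b-1); linarith
  have hcpos : (0:ℝ) < c + 1 := by linarith
  have hd1 : (0:ℝ) < d := lt_of_lt_of_le ha (le_max_left _ _)
  have hd2 : a ≤ d := le_max_left _ _
  have hd3 : b ≤ d + 1 := by have := le_max_right a (b-1); linarith
  have hL : Tendsto (fun ε : ℝ => (phiF (ε*b) - phiF (ε*a)) +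
      (b-a) * (phiF (ε*(c + (⌈t/ε⌉₊:ℝ))) - phiF (ε*(c+1)))) (𝓝[>] 0)
      (𝓝 ((b-a) * phiF t)) := by
    have T1 := tendsto_phiF_zero.comp (tendsto_mul_pos hb)
    have T2 := tendsto_phiF_zero.comp (tendsto_mul_pos ha)
    have T3 := (continuousAt_phiF ht).tendsto.comp (tendsto_arg_shift c ht)
    have T4 := tendsto_phiF_zero.comp (tendsto_mul_pos hcpos)
    have := (T1.sub T2).add ((T3.sub T4).const_mul (b-a))
    simpa using this
  have hU : Tendsto (fun ε : ℝ => (phiF (ε*b) - phiF (ε*a)) +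
      (b-a) * (phiF (ε*(d + (⌈t/ε⌉₊:ℝ))) - phiF (ε*(d+1)))) (𝓝[>] 0)
      (𝓝 ((b-a) * phiF t)) := by
    have T1 := tendsto_phiF_zero.comp (tendsto_mul_pos hb)
    have T2 := tendsto_phiF_zero.comp (tendsto_mul_pos ha)
    have T3 := (continuousAt_phiF ht).tendsto.comp (tendsto_arg_shift d ht)
    have T4 := tendsto_phiF_zero.comp (tendsto_mul_pos (by linarith : (0:ℝ) < d + 1))
    have := (T1.sub T2).add ((T3.sub T4).const_mul (b-a))
    simpa using this
  apply tendsto_of_tendsto_of_tendsto_of_le_of_le' hL hU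
  · filter_upwards [self_mem_nhdsWithin] with ε hε
    have hε0 : (0:ℝ) < ε := hε
    obtain ⟨m, hm⟩ : ∃ m, ⌈t/ε⌉₊ = m + 1 :=
      ⟨⌈t/ε⌉₊ - 1, (Nat.succ_pred_eq_of_pos (Nat.ceil_pos.2 (div_pos ht hε0))).symm⟩
    rw [hm, Finset.sum_range_succ']
    have hterm : ∀ i ∈ Finset.range m,
        (b-a) * (phiF (ε*(c+1+↑(i+1))) - phiF (ε*(c+1+↑i)))
          ≤ phiF (ε*(b+↑(i+1))) - phiF (ε*(a+↑(i+1))) := by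
      intro i _
      have hi : (0:ℝ) ≤ (i:ℝ) := Nat.cast_nonneg i
      apply phi_step_low' hε0
      · push_cast; linarith
      · push_cast; linarith
      · push_cast; linarith
      · push_cast; linarith
      · push_cast; ring
      · push_cast; ring
    have tele : ∑ i ∈ Finset.range m, (phiF (ε*(c+1+↑(i+1))) - phiF (ε*(c+1+↑i)))
        = phiF (ε*(c+1+↑m)) - phiF (ε*(c+1+↑(0:ℕ))) := by
      exact Finset.sum_range_sub (fun j : ℕ => phiF (ε*(c+1+(j:ℝ)))) m
    have key := Finset.sum_le_sum hterm
    rw [← Finset.mul_sum, tele] at key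
    simp only [Nat.cast_zero, add_zero] at key ⊢
    have e1 : c + (↑(m+1):ℝ) = c+1+↑m := by push_cast; ring
    rw [e1]
    linarith [key]
  · filter_upwards [self_mem_nhdsWithin] with ε hε
    have hε0 : (0:ℝ) < ε := hε
    obtain ⟨m, hm⟩ : ∃ m, ⌈t/ε⌉₊ = m + 1 :=
      ⟨⌈t/ε⌉₊ - 1, (Nat.succ_pred_eq_of_pos (Nat.ceil_pos.2 (div_pos ht hε0))).symm⟩
    rw [hm, Finset.sum_range_succ']
    have hterm : ∀ i ∈ Finset.range m,
        phiF (ε*(b+↑(i+1))) - phiF (ε*(a+↑(i+1)))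
          ≤ (b-a) * (phiF (ε*(d+1+↑(i+1))) - phiF (ε*(d+1+↑i))) := by
      intro i _
      have hi : (0:ℝ) ≤ (i:ℝ) := Nat.cast_nonneg i
      apply phi_step_high' hε0
      · push_cast; linarith
      · push_cast; linarith
      · push_cast; linarith
      · push_cast; linarith
      · push_cast; ring
      · push_cast; ring
    have tele : ∑ i ∈ Finset.range m, (phiF (ε*(d+1+↑(i+1))) - phiF (ε*(d+1+↑i)))
        = phiF (ε*(d+1+↑m)) - phiF (ε*(d+1+↑(0:ℕ))) := by
      exact Finset.sum_range_sub (fun j : ℕ => phiF (ε*(d+1+(j:ℝ)))) m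
    have key := Finset.sum_le_sum hterm
    rw [← Finset.mul_sum, tele] at key
    simp only [Nat.cast_zero, add_zero] at key ⊢
    have e1 : d + (↑(m+1):ℝ) = d+1+↑m := by push_cast; ring
    rw [e1]
    linarith [key]

set_option maxHeartbeats 1000000 in
lemma tailT {a b t : ℝ} (ha : 0 < a) (hab : a < b) (ht : 0 < t) :
    Tendsto (fun ε : ℝ => ∑' i : ℕ,
        (psiF (ε*(b + (⌈t/ε⌉₊:ℝ) + ↑i)) - psiF (ε*(a + (⌈t/ε⌉₊:ℝ) + ↑i))))
      (𝓝[>] 0) (𝓝 ((b-a) * (-psiF t))) := by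
  set c := min a (b-1) with hcdef
  set d := max a (b-1) with hddef
  have hc1 : -1 < c := lt_min (by linarith) (by linarith)
  have hc2 : c ≤ a := min_le_left _ _
  have hc3 : c + 1 ≤ b := by have := min_le_right a (b-1); linarith
  have hd1 : (0:ℝ) < d := lt_of_lt_of_le ha (le_max_left _ _)
  have hd2 : a ≤ d := le_max_left _ _
  have hd3 : b ≤ d + 1 := by have := le_max_right a (b-1); linarith
  have hLo : Tendsto (fun ε : ℝ => (b-a) * (-psiF (ε*(d + (⌈t/ε⌉₊:ℝ)))))
      (𝓝[>] 0) (𝓝 ((b-a) * (-psiF t))) :=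
    (((continuousAt_psiF ht).tendsto.comp (tendsto_arg_shift d ht)).neg).const_mul _
  have hHi : Tendsto (fun ε : ℝ => (b-a) * (-psiF (ε*(c + (⌈t/ε⌉₊:ℝ)))))
      (𝓝[>] 0) (𝓝 ((b-a) * (-psiF t))) :=
    (((continuousAt_psiF ht).tendsto.comp (tendsto_arg_shift c ht)).neg).const_mul _
  apply tendsto_of_tendsto_of_tendsto_of_le_of_le' hLo hHi
  · filter_upwards [self_mem_nhdsWithin] with ε hε
    have hε0 : (0:ℝ) < ε := hε
    have hN : (1:ℝ) ≤ (⌈t/ε⌉₊:ℝ) := by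
      have := Nat.ceil_pos.2 (div_pos ht hε0)
      exact_mod_cast this
    set N := (⌈t/ε⌉₊:ℝ) with hNdef
    have hcN : 0 < c + N := by linarith
    have hdN : 0 < d + N := by linarith
    have teleD := tele_hasSum hε0 hdN
    have teleDs := teleD.mul_left (b-a)
    have hnn : ∀ i : ℕ, 0 ≤ psiF (ε*(b + N + ↑i)) - psiF (ε*(a + N + ↑i)) := by
      intro i
      have h1 : (0:ℝ) < ε*(a+N+↑i) := by
        have : (0:ℝ) ≤ (i:ℝ) := Nat.cast_nonneg i
        nlinarith
      refine sub_nonneg.2 (psiF_mono h1 ?_)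
      have : (0:ℝ) ≤ (i:ℝ) := Nat.cast_nonneg i
      nlinarith
    have hup : ∀ i : ℕ, psiF (ε*(b + N + ↑i)) - psiF (ε*(a + N + ↑i))
        ≤ (b-a) * (psiF (ε*(c + N + ↑i + 1)) - psiF (ε*(c + N + ↑i))) := by
      intro i
      have hi : (0:ℝ) ≤ (i:ℝ) := Nat.cast_nonneg i
      apply psi_step_high' hε0
      · linarith
      · linarith
      · linarith
      · linarith
      · ring
      · ring
    have hlo : ∀ i : ℕ, (b-a) * (psiF (ε*(d + N + ↑i + 1)) - psiF (ε*(d + N + ↑i)))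
        ≤ psiF (ε*(b + N + ↑i)) - psiF (ε*(a + N + ↑i)) := by
      intro i
      have hi : (0:ℝ) ≤ (i:ℝ) := Nat.cast_nonneg i
      apply psi_step_low' hε0
      · linarith
      · linarith
      · linarith
      · linarith
      · ring
      · ring
    have teleC := tele_hasSum hε0 hcN
    have teleCs := teleC.mul_left (b-a)
    have hsummable : Summable (fun i : ℕ =>
        psiF (ε*(b + N + ↑i)) - psiF (ε*(a + N + ↑i))) := by
      apply Summable.of_nonneg_of_le hnn ?_ teleCs.summable
      intro i
      have := hup i
      convert this using 4 <;> ring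
    have hlow : (b-a) * (-psiF (ε*(d+N))) ≤ ∑' i : ℕ,
        (psiF (ε*(b + N + ↑i)) - psiF (ε*(a + N + ↑i))) := by
      rw [← teleDs.tsum_eq]
      apply Summable.tsum_le_tsum ?_ teleDs.summable hsummable
      intro i
      have := hlo i
      convert this using 4 <;> ring
    exact hlow
  · filter_upwards [self_mem_nhdsWithin] with ε hε
    have hε0 : (0:ℝ) < ε := hε
    have hN : (1:ℝ) ≤ (⌈t/ε⌉₊:ℝ) := by
      have := Nat.ceil_pos.2 (div_pos ht hε0)
      exact_mod_cast this
    set N := (⌈t/ε⌉₊:ℝ) with hNdef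
    have hcN : 0 < c + N := by linarith
    have teleC := tele_hasSum hε0 hcN
    have teleCs := teleC.mul_left (b-a)
    have hnn : ∀ i : ℕ, 0 ≤ psiF (ε*(b + N + ↑i)) - psiF (ε*(a + N + ↑i)) := by
      intro i
      have h1 : (0:ℝ) < ε*(a+N+↑i) := by
        have : (0:ℝ) ≤ (i:ℝ) := Nat.cast_nonneg i
        nlinarith
      refine sub_nonneg.2 (psiF_mono h1 ?_)
      have : (0:ℝ) ≤ (i:ℝ) := Nat.cast_nonneg i
      nlinarith
    have hup : ∀ i : ℕ, psiF (ε*(b + N + ↑i)) - psiF (ε*(a + N + ↑i))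
        ≤ (b-a) * (psiF (ε*(c + N + ↑i + 1)) - psiF (ε*(c + N + ↑i))) := by
      intro i
      have hi : (0:ℝ) ≤ (i:ℝ) := Nat.cast_nonneg i
      apply psi_step_high' hε0
      · linarith
      · linarith
      · linarith
      · linarith
      · ring
      · ring
    have hsummable : Summable (fun i : ℕ =>
        psiF (ε*(b + N + ↑i)) - psiF (ε*(a + N + ↑i))) := by
      apply Summable.of_nonneg_of_le hnn ?_ teleCs.summable
      intro i
      have := hup i
      convert this using 4 <;> ring
    have hhigh : ∑' i : ℕ, (psiF (ε*(b + N + ↑i)) - psiF (ε*(a + N + ↑i)))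
        ≤ (b-a) * (-psiF (ε*(c+N))) := by
      rw [← teleCs.tsum_eq]
      apply Summable.tsum_le_tsum ?_ hsummable teleCs.summable
      intro i
      have := hup i
      convert this using 4 <;> ring
    exact hhigh

lemma neg_psiF_le {x : ℝ} (hx : 0 < x) : -psiF x ≤ Real.exp (-x) / (1 - Real.exp (-x)) := by
  have h1 := one_sub_pos hx
  have h2 := Real.log_le_sub_one_of_pos (inv_pos.2 h1)
  rw [Real.log_inv] at h2
  have h3 : (1 - Real.exp (-x))⁻¹ - 1 = Real.exp (-x) / (1 - Real.exp (-x)) := by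
    field_simp
    ring
  rw [psiF]
  linarith [h3 ▸ h2]

lemma exp_arith {ε x : ℝ} (i : ℕ) :
    Real.exp (-x*ε) * Real.exp (-ε) ^ i = Real.exp (-(ε*(x+↑i))) := by
  rw [← Real.exp_nat_mul, ← Real.exp_add]
  congr 1
  ring

lemma summable_psi {ε x : ℝ} (hε : 0 < ε) (hx : 0 < x) :
    Summable (fun i : ℕ => psiF (ε*(x+↑i))) := by
  rw [← summable_neg_iff]
  have hq : Real.exp (-ε) < 1 := by rw [Real.exp_lt_one_iff]; linarith
  have h0 : (0:ℝ) < 1 - Real.exp (-(ε*x)) := one_sub_pos (by positivity)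
  apply Summable.of_nonneg_of_le
      (g := fun i : ℕ => -psiF (ε*(x+↑i)))
      (f := fun i : ℕ => (Real.exp (-(ε*x)) / (1 - Real.exp (-(ε*x)))) * Real.exp (-ε) ^ i)
  · intro i
    have hi : (0:ℝ) ≤ (i:ℝ) := Nat.cast_nonneg i
    have hxi : (0:ℝ) < ε*(x+↑i) := by nlinarith
    exact neg_nonneg.2 (psiF_neg hxi).le
  · intro i
    have hi : (0:ℝ) ≤ (i:ℝ) := Nat.cast_nonneg i
    have hxi : (0:ℝ) < ε*(x+↑i) := by nlinarith
    have h2 := neg_psiF_le hxi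
    have heq : Real.exp (-(ε*(x+↑i))) = Real.exp (-(ε*x)) * Real.exp (-ε) ^ i := by
      rw [← Real.exp_nat_mul, ← Real.exp_add]; congr 1; ring
    rw [heq] at h2
    have hr0 : (0:ℝ) ≤ Real.exp (-ε) ^ i := pow_nonneg (Real.exp_nonneg _) i
    have hr1 : Real.exp (-ε) ^ i ≤ 1 := pow_le_one₀ (Real.exp_nonneg _) hq.le
    have hq0 : (0:ℝ) < Real.exp (-(ε*x)) := Real.exp_pos _
    have hpos2 : (0:ℝ) < 1 - Real.exp (-(ε*x)) * Real.exp (-ε) ^ i := by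
      rw [← heq]; exact one_sub_pos hxi
    have h3 : Real.exp (-(ε*x)) * Real.exp (-ε) ^ i / (1 - Real.exp (-(ε*x)) * Real.exp (-ε) ^ i)
        ≤ Real.exp (-(ε*x)) * Real.exp (-ε) ^ i / (1 - Real.exp (-(ε*x))) := by
      gcongr
      nlinarith
    calc -psiF (ε*(x+↑i)) ≤ _ := h2
      _ ≤ _ := h3
      _ = Real.exp (-(ε*x)) / (1 - Real.exp (-(ε*x))) * Real.exp (-ε) ^ i := by
          field_simp
  · exact (summable_geometric_of_lt_one (Real.exp_nonneg _) hq).mul_left _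

lemma qPochInf_repr {ε x : ℝ} (hε : 0 < ε) (hx : 0 < x) :
    qPochInf (Real.exp (-x*ε)) (Real.exp (-ε)) = Real.exp (∑' i : ℕ, psiF (ε*(x+↑i))) := by
  have hs := summable_psi hε hx
  have hp := hs.hasSum.rexp
  have he : (Real.exp ∘ fun i : ℕ => psiF (ε*(x+↑i)))
      = fun i : ℕ => 1 - Real.exp (-x*ε) * Real.exp (-ε) ^ i := by
    funext i
    have hi : (0:ℝ) ≤ (i:ℝ) := Nat.cast_nonneg i
    have hxi : (0:ℝ) < ε*(x+↑i) := by nlinarith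
    rw [Function.comp_apply, exp_psiF hxi, exp_arith]
  rw [he] at hp
  rw [qPochInf]
  exact hp.tprod_eq

lemma qPoch_repr {ε x : ℝ} (n : ℕ) :
    qPoch (Real.exp (-x*ε)) (Real.exp (-ε)) n
      = ∏ i ∈ Finset.range n, (1 - Real.exp (-(ε*(x+↑i)))) := by
  rw [qPoch]
  apply Finset.prod_congr rfl
  intro i _
  rw [exp_arith]

lemma qPoch_repr1 {ε : ℝ} (n : ℕ) :
    qPoch (Real.exp (-ε)) (Real.exp (-ε)) n
      = ∏ i ∈ Finset.range n, (1 - Real.exp (-(ε*(1+↑i)))) := by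
  rw [qPoch]
  apply Finset.prod_congr rfl
  intro i _
  have h : Real.exp (-ε) * Real.exp (-ε) ^ i = Real.exp (-(ε*(1+↑i))) := by
    rw [← Real.exp_nat_mul, ← Real.exp_add]; congr 1; ring
  rw [h]

lemma split_repr {ε x : ℝ} (hε : 0 < ε) (hx : 0 < x) (n : ℕ) :
    ∑' i : ℕ, psiF (ε*(x+↑i)) = ∑ i ∈ Finset.range n, psiF (ε*(x+↑i))
      + ∑' i : ℕ, psiF (ε*(x + ↑n + ↑i)) := by
  rw [← Summable.sum_add_tsum_nat_add n (summable_psi hε hx)]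
  congr 1
  apply tsum_congr
  intro i
  congr 1
  push_cast
  ring

lemma gamma_prod {mb nb : ℝ} (hm : 0 < mb) (hmn : mb < nb) :
    Tendsto (fun m : ℕ => (m:ℝ) * ∏ i ∈ Finset.range (m+1),
        (((nb-mb)+↑i)*(mb+↑i)/((1+↑i)*(nb+↑i)))) atTop
      (𝓝 (Real.Gamma nb / (Real.Gamma (nb-mb) * Real.Gamma mb))) := by
  have hb : (0:ℝ) < nb - mb := by linarith
  have hΓβ : 0 < Real.Gamma (nb-mb) := Real.Gamma_pos_of_pos hb
  have hΓμ : 0 < Real.Gamma mb := Real.Gamma_pos_of_pos hm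
  have h1 : Tendsto (fun m : ℕ => Real.GammaSeq 1 m * Real.GammaSeq nb m /
      (Real.GammaSeq (nb-mb) m * Real.GammaSeq mb m)) atTop
      (𝓝 (Real.Gamma 1 * Real.Gamma nb / (Real.Gamma (nb-mb) * Real.Gamma mb))) :=
    ((Real.GammaSeq_tendsto_Gamma 1).mul (Real.GammaSeq_tendsto_Gamma nb)).div
      ((Real.GammaSeq_tendsto_Gamma (nb-mb)).mul (Real.GammaSeq_tendsto_Gamma mb))
      (ne_of_gt (mul_pos hΓβ hΓμ))
  rw [Real.Gamma_one, one_mul] at h1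
  apply h1.congr'
  filter_upwards [eventually_ge_atTop 1] with m hm1
  have hmpos : (0:ℝ) < (m:ℝ) := by exact_mod_cast Nat.lt_of_lt_of_le Nat.zero_lt_one hm1
  have hP : ∀ x : ℝ, 0 < x → (0:ℝ) < ∏ j ∈ Finset.range (m+1), (x+↑j) := by
    intro x hx
    apply Finset.prod_pos
    intro j _
    have := Nat.cast_nonneg (α := ℝ) j
    linarith
  have hP1 := hP 1 one_pos
  have hPb := hP (nb-mb) hb
  have hPm := hP mb hm
  have hPn := hP nb (hm.trans hmn)
  have hfact : (0:ℝ) < (m.factorial : ℝ) := by exact_mod_cast m.factorial_pos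
  rw [Real.GammaSeq, Real.GammaSeq, Real.GammaSeq, Real.GammaSeq]
  have hprod : ∏ i ∈ Finset.range (m+1), (((nb-mb)+↑i)*(mb+↑i)/((1+↑i)*(nb+↑i)))
      = (∏ i ∈ Finset.range (m+1), ((nb-mb)+↑i)) * (∏ i ∈ Finset.range (m+1), (mb+↑i)) /
        ((∏ i ∈ Finset.range (m+1), ((1:ℝ)+↑i)) * (∏ i ∈ Finset.range (m+1), (nb+↑i))) := by
    rw [← Finset.prod_mul_distrib, ← Finset.prod_mul_distrib, ← Finset.prod_div_distrib]
  rw [hprod]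
  have hradd : (m:ℝ) ^ (nb:ℝ) = (m:ℝ) ^ (nb-mb) * (m:ℝ) ^ (mb) := by
    rw [← Real.rpow_add hmpos]; congr 1; ring
  have hr1 : (m:ℝ) ^ (1:ℝ) = (m:ℝ) := Real.rpow_one _
  rw [hradd, hr1]
  have hrb : (0:ℝ) < (m:ℝ) ^ (nb-mb) := Real.rpow_pos_of_pos hmpos _
  have hrm : (0:ℝ) < (m:ℝ) ^ (mb:ℝ) := Real.rpow_pos_of_pos hmpos _
  field_simp

lemma sumS' {x y t : ℝ} (hx : 0 < x) (hy : 0 < y) (ht : 0 < t) :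
    Tendsto (fun ε : ℝ => ∑ i ∈ Finset.range (⌈t/ε⌉₊),
      (phiF (ε*(x+↑i)) - phiF (ε*(y+↑i)))) (𝓝[>] 0) (𝓝 ((x-y) * phiF t)) := by
  rcases lt_trichotomy y x with h|h|h
  · exact sumS hy h ht
  · subst h
    have h0 : Tendsto (fun _ : ℝ => (0:ℝ)) (𝓝[>] 0) (𝓝 ((y-y) * phiF t)) := by
      rw [sub_self, zero_mul]; exact tendsto_const_nhds
    apply h0.congr; intro ε; simp
  · have h2 := (sumS hx h ht).neg
    have h3 : Tendsto (fun ε : ℝ => ∑ i ∈ Finset.range (⌈t/ε⌉₊),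
        (phiF (ε*(x+↑i)) - phiF (ε*(y+↑i)))) (𝓝[>] 0) (𝓝 (-((y-x) * phiF t))) := by
      apply h2.congr
      intro ε
      rw [Finset.sum_sub_distrib, Finset.sum_sub_distrib]
      ring
    convert h3 using 2
    ring

set_option maxHeartbeats 1000000 in
lemma main_eq {mub nub t ε : ℝ} (hm : 0 < mub) (hmn : mub < nub) (ht : 0 < t) (hε : 0 < ε) :
    ε⁻¹ * (Real.exp (-mub * ε)) ^ (⌈t/ε⌉₊) *
      qPoch (Real.exp (-nub * ε) / Real.exp (-mub * ε)) (Real.exp (-ε)) (⌈t/ε⌉₊) *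
      qPochInf (Real.exp (-mub * ε)) (Real.exp (-ε)) /
      (qPoch (Real.exp (-ε)) (Real.exp (-ε)) (⌈t/ε⌉₊) *
        qPochInf (Real.exp (-nub * ε)) (Real.exp (-ε)))
    = (Real.exp (-mub * ε)) ^ (⌈t/ε⌉₊)
      * (ε⁻¹ * ∏ i ∈ Finset.range (⌈t/ε⌉₊),
          (((nub-mub)+↑i)*(mub+↑i)/(((1:ℝ)+↑i)*(nub+↑i))))
      * Real.exp ((∑ i ∈ Finset.range (⌈t/ε⌉₊),
            (phiF (ε*((nub-mub)+↑i)) + phiF (ε*(mub+↑i))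
              - phiF (ε*((1:ℝ)+↑i)) - phiF (ε*(nub+↑i))))
          + ((∑' i : ℕ, psiF (ε*(mub + ↑(⌈t/ε⌉₊) + ↑i)))
            - (∑' i : ℕ, psiF (ε*(nub + ↑(⌈t/ε⌉₊) + ↑i))))) := by
  have hn0 : 0 < nub := hm.trans hmn
  have hβ : (0:ℝ) < nub - mub := by linarith
  set n := ⌈t/ε⌉₊ with hndef
  have e1 : Real.exp (-nub * ε) / Real.exp (-mub * ε) = Real.exp (-(nub-mub) * ε) := by
    rw [← Real.exp_sub]; congr 1; ring
  rw [e1, qPoch_repr (x := nub - mub) n, qPoch_repr1 n, qPochInf_repr hε hm,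
    qPochInf_repr hε hn0, split_repr hε hm n, split_repr hε hn0 n,
    Real.exp_add, Real.exp_add]
  have hposi : ∀ (x : ℝ) (i : ℕ), 0 < x → (0:ℝ) < ε*(x+↑i) := by
    intro x i hx
    have : (0:ℝ) ≤ (i:ℝ) := Nat.cast_nonneg i
    nlinarith
  have hFμ : Real.exp (∑ i ∈ Finset.range n, psiF (ε*(mub+↑i)))
      = ∏ i ∈ Finset.range n, (1 - Real.exp (-(ε*(mub+↑i)))) := by
    rw [Real.exp_sum]
    exact Finset.prod_congr rfl fun i _ => exp_psiF (hposi mub i hm)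
  have hFν : Real.exp (∑ i ∈ Finset.range n, psiF (ε*(nub+↑i)))
      = ∏ i ∈ Finset.range n, (1 - Real.exp (-(ε*(nub+↑i)))) := by
    rw [Real.exp_sum]
    exact Finset.prod_congr rfl fun i _ => exp_psiF (hposi nub i hn0)
  rw [hFμ, hFν]
  have hPpos : ∀ (x : ℝ), 0 < x →
      (0:ℝ) < ∏ i ∈ Finset.range n, (1 - Real.exp (-(ε*(x+↑i)))) := by
    intro x hx
    exact Finset.prod_pos fun i _ => one_sub_pos (hposi x i hx)
  have hP1 := hPpos 1 one_pos
  have hPν := hPpos nub hn0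
  have key : (∏ i ∈ Finset.range n, (1 - Real.exp (-(ε*((nub-mub)+↑i)))))
        * (∏ i ∈ Finset.range n, (1 - Real.exp (-(ε*(mub+↑i)))))
        / ((∏ i ∈ Finset.range n, (1 - Real.exp (-(ε*((1:ℝ)+↑i)))))
        * (∏ i ∈ Finset.range n, (1 - Real.exp (-(ε*(nub+↑i))))))
      = (∏ i ∈ Finset.range n, (((nub-mub)+↑i)*(mub+↑i)/(((1:ℝ)+↑i)*(nub+↑i))))
        * Real.exp (∑ i ∈ Finset.range n,
            (phiF (ε*((nub-mub)+↑i)) + phiF (ε*(mub+↑i))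
              - phiF (ε*((1:ℝ)+↑i)) - phiF (ε*(nub+↑i)))) := by
    rw [Real.exp_sum, ← Finset.prod_mul_distrib, ← Finset.prod_mul_distrib,
      ← Finset.prod_mul_distrib, ← Finset.prod_div_distrib]
    apply Finset.prod_congr rfl
    intro i _
    have pβ := hposi (nub-mub) i hβ
    have pμ := hposi mub i hm
    have p1 := hposi 1 i one_pos
    have pν := hposi nub i hn0
    rw [one_sub_eq pβ, one_sub_eq pμ, one_sub_eq p1, one_sub_eq pν,
      Real.exp_sub, Real.exp_sub, Real.exp_add]
    have d1 : ε*((1:ℝ)+↑i) ≠ 0 := ne_of_gt p1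
    have dν : ε*(nub+↑i) ≠ 0 := ne_of_gt pν
    have c1 : ((1:ℝ)+↑i) ≠ 0 := by
      have : (0:ℝ) ≤ (i:ℝ) := Nat.cast_nonneg i; linarith
    have cν : (nub+↑i) ≠ 0 := by
      have : (0:ℝ) ≤ (i:ℝ) := Nat.cast_nonneg i; linarith
    have x1 : Real.exp (phiF (ε*((1:ℝ)+↑i))) ≠ 0 := Real.exp_ne_zero _
    have xν : Real.exp (phiF (ε*(nub+↑i))) ≠ 0 := Real.exp_ne_zero _
    field_simp
  rw [Real.exp_add, Real.exp_sub]
  have hTν : Real.exp (∑' i : ℕ, psiF (ε*(nub + ↑n + ↑i))) ≠ 0 := Real.exp_ne_zero _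
  have hU : Real.exp (∑ i ∈ Finset.range n,
      (phiF (ε*((nub-mub)+↑i)) + phiF (ε*(mub+↑i))
        - phiF (ε*((1:ℝ)+↑i)) - phiF (ε*(nub+↑i)))) ≠ 0 := Real.exp_ne_zero _
  have hε' : ε ≠ 0 := ne_of_gt hε
  field_simp
  field_simp at key
  linear_combination key

end S14

/-- The rescaled φ_{q,μ,ν}(·|∞) weights converge to the beta density
under the q → 1 scaling. -/
theorem stmt_14 (t mub nub : ℝ) (hmu : 0 < mub) (hmn : mub < nub) (ht : 0 < t) :
    Filter.Tendsto
      (fun eps : ℝ =>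
        eps⁻¹ * (Real.exp (-mub * eps)) ^ (Nat.ceil (t / eps)) *
          qPoch (Real.exp (-nub * eps) / Real.exp (-mub * eps)) (Real.exp (-eps))
            (Nat.ceil (t / eps)) *
          qPochInf (Real.exp (-mub * eps)) (Real.exp (-eps)) /
          (qPoch (Real.exp (-eps)) (Real.exp (-eps)) (Nat.ceil (t / eps)) *
            qPochInf (Real.exp (-nub * eps)) (Real.exp (-eps))))
      (nhdsWithin 0 (Set.Ioi 0))
      (nhds (Real.exp (-t * mub) * (1 - Real.exp (-t)) ^ (nub - mub - 1) *
        Real.Gamma nub / (Real.Gamma mub * Real.Gamma (nub - mub)))) := by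
  have hn0 : 0 < nub := hmu.trans hmn
  have hβ : (0:ℝ) < nub - mub := by linarith
  have hF1 : Tendsto (fun ε : ℝ => (Real.exp (-mub * ε)) ^ (⌈t/ε⌉₊)) (𝓝[>] 0)
      (𝓝 (Real.exp (-(mub*t)))) := by
    have harg : Tendsto (fun ε : ℝ => -(mub * (ε * (⌈t/ε⌉₊:ℝ)))) (𝓝[>] 0) (𝓝 (-(mub*t))) :=
      ((S14.tendsto_eps_ceil ht).const_mul mub).neg
    have h2 := (Real.continuous_exp.tendsto _).comp harg
    apply h2.congr
    intro ε
    rw [Function.comp_apply, ← Real.exp_nat_mul]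
    congr 1
    ring
  have hdiv : Tendsto (fun ε : ℝ => t/ε) (𝓝[>] 0) atTop := by
    have h1 := (tendsto_inv_nhdsGT_zero (𝕜 := ℝ)).const_mul_atTop ht
    apply h1.congr
    intro ε
    rw [div_eq_mul_inv]
  have htopR : Tendsto (fun ε : ℝ => ((⌈t/ε⌉₊ : ℕ) : ℝ)) (𝓝[>] 0) atTop :=
    tendsto_atTop_mono (fun ε => Nat.le_ceil (t/ε)) hdiv
  have htop : Tendsto (fun ε : ℝ => (⌈t/ε⌉₊ : ℕ)) (𝓝[>] 0) atTop :=
    tendsto_natCast_atTop_iff.1 htopR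
  have hm1 : Tendsto (fun ε : ℝ => (⌈t/ε⌉₊ : ℕ) - 1) (𝓝[>] 0) atTop := by
    rw [tendsto_atTop]
    intro N
    filter_upwards [htop.eventually (eventually_ge_atTop (N+1))] with ε h
    omega
  have hcomp := (S14.gamma_prod hmu hmn).comp hm1
  have hεm : Tendsto (fun ε : ℝ => ε * ((⌈t/ε⌉₊ - 1 : ℕ) : ℝ)) (𝓝[>] 0) (𝓝 t) := by
    have h1 := (S14.tendsto_eps_ceil ht).sub
      (tendsto_id.mono_left (nhdsWithin_le_nhds (s := Set.Ioi (0:ℝ))))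
    rw [sub_zero] at h1
    apply h1.congr'
    filter_upwards [self_mem_nhdsWithin] with ε hε
    have hn1 : 1 ≤ (⌈t/ε⌉₊ : ℕ) := Nat.ceil_pos.2 (div_pos ht hε)
    rw [Nat.cast_sub hn1]
    simp only [id_eq]
    push_cast
    ring
  have hinv := hεm.inv₀ (ne_of_gt ht)
  have hF2pre := hcomp.mul hinv
  have hF2 : Tendsto (fun ε : ℝ => ε⁻¹ * ∏ i ∈ Finset.range (⌈t/ε⌉₊),
      (((nub-mub)+↑i)*(mub+↑i)/(((1:ℝ)+↑i)*(nub+↑i)))) (𝓝[>] 0)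
      (𝓝 (Real.Gamma nub / (Real.Gamma (nub-mub) * Real.Gamma mub) * t⁻¹)) := by
    apply hF2pre.congr'
    filter_upwards [self_mem_nhdsWithin, htop.eventually (eventually_ge_atTop 2)] with ε hε hn2
    simp only [Function.comp_apply]
    have hneq : ((⌈t/ε⌉₊ : ℕ) - 1) + 1 = (⌈t/ε⌉₊ : ℕ) := by omega
    rw [hneq]
    have hm0 : ((⌈t/ε⌉₊ - 1 : ℕ) : ℝ) ≠ 0 := Nat.cast_ne_zero.2 (by omega)
    have hε' : (ε:ℝ) ≠ 0 := ne_of_gt hε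
    set P := ∏ i ∈ Finset.range (⌈t/ε⌉₊ : ℕ),
      (((nub-mub)+↑i)*(mub+↑i)/(((1:ℝ)+↑i)*(nub+↑i))) with hPdef
    have hge1 : 1 ≤ (⌈t/ε⌉₊ : ℕ) := by omega
    rw [Nat.cast_sub hge1, Nat.cast_one]
    have hm1' : ((⌈t/ε⌉₊ : ℕ):ℝ) - 1 ≠ 0 := by
      have h2 : (2:ℝ) ≤ ((⌈t/ε⌉₊ : ℕ):ℝ) := by exact_mod_cast hn2
      linarith
    rw [mul_inv]
    field_simp
  have hS1 := S14.sumS' hβ one_pos ht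
  have hS2 := S14.sumS' hmu hn0 ht
  have hU : Tendsto (fun ε : ℝ => ∑ i ∈ Finset.range (⌈t/ε⌉₊),
      (S14.phiF (ε*((nub-mub)+↑i)) + S14.phiF (ε*(mub+↑i))
        - S14.phiF (ε*((1:ℝ)+↑i)) - S14.phiF (ε*(nub+↑i)))) (𝓝[>] 0)
      (𝓝 (-(S14.phiF t))) := by
    have h1 := hS1.add hS2
    have h2 : Tendsto (fun ε : ℝ => ∑ i ∈ Finset.range (⌈t/ε⌉₊),
        (S14.phiF (ε*((nub-mub)+↑i)) + S14.phiF (ε*(mub+↑i))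
          - S14.phiF (ε*((1:ℝ)+↑i)) - S14.phiF (ε*(nub+↑i)))) (𝓝[>] 0)
        (𝓝 (((nub-mub) - 1) * S14.phiF t + (mub - nub) * S14.phiF t)) := by
      apply h1.congr
      intro ε
      rw [← Finset.sum_add_distrib]
      apply Finset.sum_congr rfl
      intro i _
      ring
    convert h2 using 2
    ring
  have hW := S14.tailT hmu hmn ht
  have hT : Tendsto (fun ε : ℝ => (∑' i : ℕ, S14.psiF (ε*(mub + ↑(⌈t/ε⌉₊ : ℕ) + ↑i)))
      - (∑' i : ℕ, S14.psiF (ε*(nub + ↑(⌈t/ε⌉₊ : ℕ) + ↑i)))) (𝓝[>] 0)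
      (𝓝 (-((nub - mub) * (-S14.psiF t)))) := by
    apply hW.neg.congr'
    filter_upwards [self_mem_nhdsWithin] with ε hε
    have hcast : (0:ℝ) ≤ ((⌈t/ε⌉₊ : ℕ) : ℝ) := Nat.cast_nonneg _
    have hsμ : Summable (fun i : ℕ => S14.psiF (ε*(mub + ↑(⌈t/ε⌉₊ : ℕ) + ↑i))) :=
      S14.summable_psi hε (by linarith)
    have hsν : Summable (fun i : ℕ => S14.psiF (ε*(nub + ↑(⌈t/ε⌉₊ : ℕ) + ↑i))) :=
      S14.summable_psi hε (by linarith)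
    rw [Summable.tsum_sub hsν hsμ]
    ring
  have hUT := hU.add hT
  have hF3 := (Real.continuous_exp.tendsto _).comp hUT
  have hAll := (hF1.mul hF2).mul hF3
  have hΓβ := Real.Gamma_pos_of_pos hβ
  have hΓμ := Real.Gamma_pos_of_pos hmu
  have hval : Real.exp (-(mub*t)) * (Real.Gamma nub / (Real.Gamma (nub-mub) * Real.Gamma mub) * t⁻¹)
      * Real.exp (-(S14.phiF t) + -((nub - mub) * (-S14.psiF t)))
      = Real.exp (-t * mub) * (1 - Real.exp (-t)) ^ (nub - mub - 1) *
        Real.Gamma nub / (Real.Gamma mub * Real.Gamma (nub - mub)) := by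
    have e7 : -(S14.phiF t) + -((nub - mub) * (-S14.psiF t))
        = Real.log t + ((nub - mub) - 1) * S14.psiF t := by
      simp only [S14.phiF]; ring
    rw [e7, Real.exp_add, Real.exp_log ht]
    have e6 : Real.exp (((nub - mub) - 1) * S14.psiF t)
        = (1 - Real.exp (-t)) ^ (nub - mub - 1) := by
      rw [Real.rpow_def_of_pos (S14.one_sub_pos ht)]
      simp only [S14.psiF]
      congr 1
      ring
    rw [e6, show -(mub*t) = -t*mub from by ring]
    field_simp
  rw [← hval]
  apply hAll.congr'
  filter_upwards [self_mem_nhdsWithin] with ε hε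
  simp only [Function.comp_apply]
  exact (S14.main_eq hmu hmn ht hε).symm
end

section
/- Let q = e^{−ε}, μ = e^{−αε}, ν = e^{−(α+β)ε} with α, β > 0 fixed, and fix integers 0 ≤ s ≤ y. Then as ε → 0+, the q-beta-binomial weight φ_{q,μ,ν}(s|y) converges to the beta-binomial probability Γ(α+y−s)Γ(β+s)Γ(α+β)Γ(y+1) / (Γ(α)Γ(β)Γ(α+β+y)Γ(s+1)Γ(y−s+1)). -/
open Filter Topology MeasureTheory

lemma slope_lim (c : ℝ) :
    Tendsto (fun e : ℝ => (1 - Real.exp (-(c*e)))/e) (nhdsWithin 0 (Set.Ioi 0)) (nhds c) := by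
  have hd : HasDerivAt (fun x : ℝ => 1 - Real.exp (-(c*x))) c 0 := by
    have h1 : HasDerivAt (fun x : ℝ => -(c*x)) (-c) 0 := by
      have h0 := ((hasDerivAt_id (0:ℝ)).const_mul c).neg; simp at h0; exact h0
    have h2 := (Real.hasDerivAt_exp (-(c*0))).comp 0 h1
    have h3 : HasDerivAt (fun x : ℝ => Real.exp (-(c*x))) (-c) 0 := by
      simpa [Function.comp_def] using h2
    simpa using (h3.const_sub 1)
  have := hasDerivAt_iff_tendsto_slope.mp hd
  have h0 : (fun x : ℝ => 1 - Real.exp (-(c*x))) 0 = 0 := by simp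
  refine Tendsto.congr ?_ (this.mono_left (nhdsWithin_mono _ ?_))
  · intro x
    simp [slope, h0, div_eq_inv_mul]
  · intro x hx
    exact ne_of_gt hx

lemma qPoch_lim (c : ℝ) (n : ℕ) :
    Tendsto (fun e : ℝ => qPoch (Real.exp (-(c*e))) (Real.exp (-e)) n / e ^ n)
      (nhdsWithin 0 (Set.Ioi 0)) (nhds (∏ i ∈ Finset.range n, (c + i))) := by
  have key : ∀ e : ℝ, qPoch (Real.exp (-(c*e))) (Real.exp (-e)) n / e ^ n
      = ∏ i ∈ Finset.range n, (1 - Real.exp (-((c+i)*e)))/e := by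
    intro e
    rw [qPoch, Finset.prod_div_distrib, Finset.prod_const, Finset.card_range]
    congr 1
    refine Finset.prod_congr rfl fun i _ => ?_
    rw [← Real.exp_nat_mul, ← Real.exp_add]
    congr 1
    ring
  simp only [key]
  exact tendsto_finset_prod _ fun i _ => slope_lim (c + i)

lemma aux_cancel (m A B C D E F p1 p2 : ℝ) (h1 : p1 ≠ 0) (h2 : p2 ≠ 0) :
    m * (A * B * (p1 * p2)) * (D * (p1 * p2)) / (p1 * p2 * C * (p1 * p2 * (E * F)))
      = m * (A * B) * D / (C * (E * F)) := by
  rw [show m * (A * B * (p1 * p2)) * (D * (p1 * p2))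
        = m * (A * B) * D * (p1 * p2 * (p1 * p2)) from by ring,
      show p1 * p2 * C * (p1 * p2 * (E * F))
        = C * (E * F) * (p1 * p2 * (p1 * p2)) from by ring,
      mul_div_mul_right _ _ (by simp [h1, h2] : p1 * p2 * (p1 * p2) ≠ 0)]

lemma prod_gamma (x : ℝ) (hx : 0 < x) (n : ℕ) :
    ∏ i ∈ Finset.range n, (x + i) = Real.Gamma (x + n) / Real.Gamma x := by
  induction n with
  | zero => simp [div_self (ne_of_gt (Real.Gamma_pos_of_pos hx))]
  | succ n ih =>
      rw [Finset.prod_range_succ, ih]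
      have h : Real.Gamma (x + (n+1) : ℝ) = (x + n) * Real.Gamma (x + n) := by
        have := Real.Gamma_add_one (s := x + (n:ℝ)) (by positivity)
        rw [← this]; ring_nf
      push_cast
      rw [h]
      field_simp

/-- The q-beta-binomial weights converge to beta-binomial probabilities as q → 1. -/
theorem stmt_15 (alpha beta : ℝ) (ha : 0 < alpha) (hb : 0 < beta) (s y : ℕ) (hs : s ≤ y) :
    Filter.Tendsto
      (fun eps : ℝ =>
        phiW (Real.exp (-eps)) (Real.exp (-alpha * eps)) (Real.exp (-(alpha + beta) * eps)) s y)
      (nhdsWithin 0 (Set.Ioi 0))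
      (nhds (Real.Gamma (alpha + y - s) * Real.Gamma (beta + s) * Real.Gamma (alpha + beta) *
          Real.Gamma (y + 1) /
        (Real.Gamma alpha * Real.Gamma beta * Real.Gamma (alpha + beta + y) *
          Real.Gamma (s + 1) * Real.Gamma (y - s + 1)))) := by
  set G : ℝ → ℝ := fun e =>
    Real.exp (-(alpha * e)) ^ s *
      ((qPoch (Real.exp (-(beta * e))) (Real.exp (-e)) s / e ^ s) *
        (qPoch (Real.exp (-(alpha * e))) (Real.exp (-e)) (y - s) / e ^ (y - s)) /
        (qPoch (Real.exp (-((alpha + beta) * e))) (Real.exp (-e)) y / e ^ y)) *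
      ((qPoch (Real.exp (-(1 * e))) (Real.exp (-e)) y / e ^ y) /
        ((qPoch (Real.exp (-(1 * e))) (Real.exp (-e)) s / e ^ s) *
          (qPoch (Real.exp (-(1 * e))) (Real.exp (-e)) (y - s) / e ^ (y - s)))) with hG
  have hcongr : ∀ᶠ e in nhdsWithin (0:ℝ) (Set.Ioi 0),
      phiW (Real.exp (-e)) (Real.exp (-alpha * e)) (Real.exp (-(alpha + beta) * e)) s y = G e := by
    filter_upwards [self_mem_nhdsWithin] with e (he : 0 < e)
    have hε : e ≠ 0 := ne_of_gt he
    have hnu : Real.exp (-(alpha + beta) * e) / Real.exp (-alpha * e)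
        = Real.exp (-(beta * e)) := by
      rw [← Real.exp_sub]; congr 1; ring
    have h1 : Real.exp (-alpha * e) = Real.exp (-(alpha * e)) := by congr 1; ring
    have h2 : Real.exp (-(alpha + beta) * e) = Real.exp (-((alpha + beta) * e)) := by
      congr 1; ring
    have h3 : Real.exp (-e) = Real.exp (-(1 * e)) := by congr 1; ring
    rw [phiW, hnu, h1, h2, hG]
    rw [h3]
    have hpow : e ^ y = e ^ s * e ^ (y - s) := by
      rw [← pow_add]; congr 1; omega
    field_simp
  rw [tendsto_congr' hcongr]
  have hmu : Tendsto (fun e : ℝ => Real.exp (-(alpha * e)) ^ s)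
      (nhdsWithin 0 (Set.Ioi 0)) (nhds 1) := by
    have hc : Continuous fun e : ℝ => Real.exp (-(alpha * e)) ^ s := by continuity
    have := hc.tendsto 0
    simp only [mul_zero, neg_zero, Real.exp_zero, one_pow] at this
    exact this.mono_left nhdsWithin_le_nhds
  have hA := qPoch_lim beta s
  have hB := qPoch_lim alpha (y - s)
  have hC := qPoch_lim (alpha + beta) y
  have hD := qPoch_lim 1 y
  have hE := qPoch_lim 1 s
  have hF := qPoch_lim 1 (y - s)
  have hCpos : 0 < ∏ i ∈ Finset.range y, (alpha + beta + (i : ℝ)) :=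
    Finset.prod_pos fun i _ => by positivity
  have hEpos : 0 < ∏ i ∈ Finset.range s, ((1 : ℝ) + (i : ℝ)) :=
    Finset.prod_pos fun i _ => by positivity
  have hFpos : 0 < ∏ i ∈ Finset.range (y - s), ((1 : ℝ) + (i : ℝ)) :=
    Finset.prod_pos fun i _ => by positivity
  have hlim : Tendsto G (nhdsWithin (0:ℝ) (Set.Ioi 0))
      (nhds (1 * ((∏ i ∈ Finset.range s, (beta + (i:ℝ))) *
          (∏ i ∈ Finset.range (y - s), (alpha + (i:ℝ))) /
          (∏ i ∈ Finset.range y, (alpha + beta + (i:ℝ)))) *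
        ((∏ i ∈ Finset.range y, ((1:ℝ) + (i:ℝ))) /
          ((∏ i ∈ Finset.range s, ((1:ℝ) + (i:ℝ))) *
            (∏ i ∈ Finset.range (y - s), ((1:ℝ) + (i:ℝ))))))) := by
    exact (hmu.mul ((hA.mul hB).div hC hCpos.ne')).mul
      (hD.div (hE.mul hF) (by positivity))
  convert hlim using 2
  rw [prod_gamma beta hb s, prod_gamma alpha ha (y - s),
    prod_gamma (alpha + beta) (by positivity) y, prod_gamma 1 one_pos y,
    prod_gamma 1 one_pos s, prod_gamma 1 one_pos (y - s), Real.Gamma_one,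
    Nat.cast_sub hs]
  have g1 := (Real.Gamma_pos_of_pos ha).ne'
  have g2 := (Real.Gamma_pos_of_pos hb).ne'
  have g3 := (Real.Gamma_pos_of_pos (show (0:ℝ) < alpha + beta by positivity)).ne'
  have g4 := (Real.Gamma_pos_of_pos (show (0:ℝ) < alpha + beta + y by positivity)).ne'
  have g5 := (Real.Gamma_pos_of_pos (show (0:ℝ) < 1 + (s:ℕ) by positivity)).ne'
  have g6 : Real.Gamma (1 + ((y:ℝ) - (s:ℝ))) ≠ 0 := by
    have : (0:ℝ) < 1 + ((y:ℝ) - (s:ℝ)) := by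
      have : (s:ℝ) ≤ (y:ℝ) := by exact_mod_cast hs
      linarith
    exact (Real.Gamma_pos_of_pos this).ne'
  have e1 : Real.Gamma ((y:ℝ) + 1) = Real.Gamma (1 + (y:ℝ)) := by rw [add_comm]
  have e2 : Real.Gamma ((s:ℝ) + 1) = Real.Gamma (1 + (s:ℝ)) := by rw [add_comm]
  have e3 : Real.Gamma ((y:ℝ) - (s:ℝ) + 1) = Real.Gamma (1 + ((y:ℝ) - (s:ℝ))) := by
    rw [add_comm]
  have e4 : Real.Gamma (alpha + (y:ℝ) - (s:ℝ)) = Real.Gamma (alpha + ((y:ℝ) - (s:ℝ))) := by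
    ring_nf
  have e5 : Real.Gamma (alpha + beta + (y:ℝ)) = Real.Gamma (alpha + beta + (y:ℝ)) := rfl
  rw [e1, e2, e3, e4]
  field_simp
end

section
/- Let 0 < q < 1, 0 < μ < 1, −1 < ν ≤ 0. Then for all nonnegative integers ℓ, g, L, the q-Hahn PushTASEP update probability P_{ℓ,g}(L) = ∑_{p=0}^{min{ℓ,L}} φ_{q^{−1},q^g,μνq^{g−1}}(p|ℓ) ψ_{q,νμ^{−1}q^p,νq^g,ν²q^{g+p}}(L−p) is nonnegative, since each factor φ_{q^{−1},q^g,μνq^{g−1}}(p|ℓ) ≥ 0 and each factor ψ_{q,νμ^{−1}q^p,νq^g,ν²q^{g+p}}(L−p) ≥ 0 termwise. -/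
open Filter Topology MeasureTheory

/-!
For `ν ≤ 0` every factor `1 - a q^i` of the Pochhammer symbols in `φ` and `ψ` has either
`a ≤ 0`, or `a ≤ 1` with `0 ≤ q ≤ 1`. The two exceptions live in `φ` at base `q⁻¹`: the symbol
`(q^g; q⁻¹)_n` has nonnegative factors up to `i = g` and vanishes beyond, and every factor of the
`q⁻¹`-factorials is negative, so the signs cancel in the `q⁻¹`-binomial coefficient. In `ψ` the
argument `c/(ab)` equals `μ`.
-/

open Finset

section Factors

variable {a q : ℝ}

lemma one_sub_mul_pow_nonneg_of_nonpos (ha : a ≤ 0) (hq : 0 ≤ q) (i : ℕ) :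
    0 ≤ 1 - a * q ^ i := by
  linarith [mul_nonpos_of_nonpos_of_nonneg ha (pow_nonneg hq i)]

lemma one_sub_mul_pow_nonneg_of_le_one (ha : a ≤ 1) (hq0 : 0 ≤ q) (hq1 : q ≤ 1) (i : ℕ) :
    0 ≤ 1 - a * q ^ i := by
  linarith [mul_le_one₀ ha (pow_nonneg hq0 i) (pow_le_one₀ hq0 hq1)]

lemma qPoch_nonneg {n : ℕ} (h : ∀ i < n, 0 ≤ 1 - a * q ^ i) : 0 ≤ qPoch a q n :=
  prod_nonneg fun i hi => h i (mem_range.mp hi)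

lemma qPochInf_nonneg (h : ∀ i, 0 ≤ 1 - a * q ^ i) : 0 ≤ qPochInf a q :=
  tprod_nonneg h

lemma qPoch_eq_neg_one_pow_mul (n : ℕ) :
    qPoch a q n = (-1) ^ n * ∏ i ∈ range n, (a * q ^ i - 1) := by
  have := prod_neg (s := range n) fun i => a * q ^ i - 1
  rw [card_range] at this
  rw [qPoch, ← this]
  exact prod_congr rfl fun i _ => by ring

end Factors

lemma qPoch_pow_inv_nonneg {q : ℝ} (hq0 : 0 < q) (hq1 : q ≤ 1) (g n : ℕ) :
    0 ≤ qPoch (q ^ g) q⁻¹ n := by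
  have hcancel : ∀ i : ℕ, q ^ i * q⁻¹ ^ i = 1 := fun i => by
    rw [← mul_pow, mul_inv_cancel₀ hq0.ne', one_pow]
  rcases le_or_gt n g with hng | hgn
  · refine qPoch_nonneg fun i hi => ?_
    have : q ^ g * q⁻¹ ^ i ≤ q ^ i * q⁻¹ ^ i :=
      mul_le_mul_of_nonneg_right (pow_le_pow_of_le_one hq0.le hq1 (by omega))
        (pow_nonneg (inv_nonneg.mpr hq0.le) i)
    linarith [hcancel i]
  · -- the factor `i = g` is `1 - q^g q^{-g} = 0`
    refine (prod_eq_zero (mem_range.mpr hgn) ?_).ge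
    rw [hcancel, sub_self]

lemma qBinomial_nonneg_of_one_le {r : ℝ} (hr : 1 ≤ r) {s y : ℕ} (hsy : s ≤ y) :
    0 ≤ qPoch r r y / (qPoch r r s * qPoch r r (y - s)) := by
  have hfac : ∀ n, 0 ≤ ∏ i ∈ range n, (r * r ^ i - 1) := fun n =>
    prod_nonneg fun i _ => by
      linarith [one_le_mul_of_one_le_of_one_le hr (one_le_pow₀ hr (n := i))]
  have hsign : ((-1 : ℝ) ^ s * (-1) ^ (y - s)) = (-1) ^ y := by
    rw [← pow_add, Nat.add_sub_cancel' hsy]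
  rw [qPoch_eq_neg_one_pow_mul, qPoch_eq_neg_one_pow_mul, qPoch_eq_neg_one_pow_mul,
    mul_mul_mul_comm, hsign, mul_div_mul_left _ _ (pow_ne_zero _ (by norm_num))]
  exact div_nonneg (hfac y) (mul_nonneg (hfac s) (hfac (y - s)))

lemma phiW_inv_pow_nonneg {q ν : ℝ} (hq0 : 0 < q) (hq1 : q ≤ 1) (hν : ν ≤ 0) (g : ℕ)
    {s y : ℕ} (hsy : s ≤ y) : 0 ≤ phiW q⁻¹ (q ^ g) ν s y := by
  have hqinv : 0 ≤ q⁻¹ := inv_nonneg.mpr hq0.le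
  have hqg : 0 ≤ q ^ g := pow_nonneg hq0.le g
  unfold phiW
  refine mul_nonneg (mul_nonneg (pow_nonneg hqg s) (div_nonneg (mul_nonneg ?_ ?_) ?_)) ?_
  · exact qPoch_nonneg fun i _ =>
      one_sub_mul_pow_nonneg_of_nonpos (div_nonpos_of_nonpos_of_nonneg hν hqg) hqinv i
  · exact qPoch_pow_inv_nonneg hq0 hq1 g (y - s)
  · exact qPoch_nonneg fun i _ => one_sub_mul_pow_nonneg_of_nonpos hν hqinv i
  · exact qBinomial_nonneg_of_one_le ((one_le_inv₀ hq0).mpr hq1) hsy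

lemma psiW_nonneg {q a b c : ℝ} (hq0 : 0 ≤ q) (hq1 : q ≤ 1) (ha : a ≤ 0) (hb : b ≤ 0)
    (hc0 : 0 ≤ c) (hc1 : c ≤ 1) (habc : c ≤ a * b) (m : ℕ) : 0 ≤ psiW q a b c m := by
  have hab : 0 ≤ a * b := mul_nonneg_of_nonpos_of_nonpos ha hb
  have hcab0 : 0 ≤ c / (a * b) := div_nonneg hc0 hab
  have hcab1 : c / (a * b) ≤ 1 := div_le_one_of_le₀ habc hab
  have hle_one {x : ℝ} (hx : x ≤ 1) (i : ℕ) := one_sub_mul_pow_nonneg_of_le_one hx hq0 hq1 i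
  have hnonpos {x : ℝ} (hx : x ≤ 0) (i : ℕ) := one_sub_mul_pow_nonneg_of_nonpos hx hq0 i
  unfold psiW
  refine mul_nonneg (mul_nonneg (pow_nonneg hcab0 m) (div_nonneg ?_ ?_)) (div_nonneg ?_ ?_)
  · exact mul_nonneg (qPoch_nonneg fun i _ => hnonpos ha i)
      (qPoch_nonneg fun i _ => hnonpos hb i)
  · exact mul_nonneg (qPoch_nonneg fun i _ => hle_one hq1 i)
      (qPoch_nonneg fun i _ => hle_one hc1 i)
  · exact mul_nonneg (qPochInf_nonneg (hle_one hc1)) (qPochInf_nonneg (hle_one hcab1))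
  · exact mul_nonneg (qPochInf_nonneg (hnonpos (div_nonpos_of_nonneg_of_nonpos hc0 ha)))
      (qPochInf_nonneg (hnonpos (div_nonpos_of_nonneg_of_nonpos hc0 hb)))

lemma psiW_qHahn_nonneg {q μ ν : ℝ} (hq0 : 0 < q) (hq1 : q < 1) (hμ0 : 0 < μ) (hμ1 : μ < 1)
    (hν0 : -1 < ν) (hν1 : ν ≤ 0) (g p m : ℕ) :
    0 ≤ psiW q (ν * μ⁻¹ * q ^ p) (ν * q ^ g) (ν ^ 2 * q ^ (g + p)) m := by
  have hc0 : 0 ≤ ν ^ 2 * q ^ (g + p) := by positivity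
  have hab : ν * μ⁻¹ * q ^ p * (ν * q ^ g) = ν ^ 2 * q ^ (g + p) * μ⁻¹ := by ring
  refine psiW_nonneg hq0.le hq1.le ?_ ?_ hc0 ?_ ?_ m
  · exact mul_nonpos_of_nonpos_of_nonneg
      (mul_nonpos_of_nonpos_of_nonneg hν1 (inv_nonneg.mpr hμ0.le)) (pow_nonneg hq0.le p)
  · exact mul_nonpos_of_nonpos_of_nonneg hν1 (pow_nonneg hq0.le g)
  · exact mul_le_one₀ (by nlinarith) (pow_nonneg hq0.le _) (pow_le_one₀ hq0.le hq1.le)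
  · rw [hab]
    exact le_mul_of_one_le_right hc0 ((one_le_inv₀ hμ0).mpr hμ1.le)

/-- Nonnegativity of the q-Hahn PushTASEP update probabilities in the case nu ≤ 0:
each factor is termwise nonnegative, hence so is P_{l,g}(L). -/
theorem stmt_18 (q mu nu : ℝ) (hq0 : 0 < q) (hq1 : q < 1) (hmu0 : 0 < mu) (hmu1 : mu < 1)
    (hnu0 : -1 < nu) (hnu1 : nu ≤ 0) (l g L : ℕ) :
    (∀ p ≤ min l L,
        0 ≤ phiW q⁻¹ (q ^ g) (mu * nu * q ^ ((g : ℤ) - 1)) p l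
        ∧ 0 ≤ psiW q (nu * mu⁻¹ * q ^ p) (nu * q ^ g) (nu ^ 2 * q ^ (g + p)) (L - p))
    ∧ 0 ≤ Phahn q mu nu l g L := by
  have hν : mu * nu * q ^ ((g : ℤ) - 1) ≤ 0 :=
    mul_nonpos_of_nonpos_of_nonneg (mul_nonpos_of_nonneg_of_nonpos hmu0.le hnu1)
      (zpow_nonneg hq0.le _)
  have hterms : ∀ p ≤ min l L,
      0 ≤ phiW q⁻¹ (q ^ g) (mu * nu * q ^ ((g : ℤ) - 1)) p l
      ∧ 0 ≤ psiW q (nu * mu⁻¹ * q ^ p) (nu * q ^ g) (nu ^ 2 * q ^ (g + p)) (L - p) :=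
    fun p hp => ⟨phiW_inv_pow_nonneg hq0 hq1.le hν g (hp.trans (min_le_left l L)),
      psiW_qHahn_nonneg hq0 hq1 hmu0 hmu1 hnu0 hnu1 g p (L - p)⟩
  refine ⟨hterms, sum_nonneg fun p hp => ?_⟩
  obtain ⟨hphi, hpsi⟩ := hterms p (Nat.lt_succ_iff.mp (mem_range.mp hp))
  exact mul_nonneg hphi hpsi
end
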